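/- arXiv:2009.10081 — 7 statements merged into one kernel-verified Lean document; each statement's English description precedes it below -/
import Mathlib

section
/- A sequence (p_n)_{n∈ℕ} of polynomial functions p_n : Sym_n(ℝ) → ℝ is given by a single pure trace polynomial p ∈ 𝒯, in the sense that p_n(X) = p(X) for all n and all X ∈ Sym_n(ℝ), if and only if: (i) p_n(O X Oᵀ) = p_n(X) for every n ∈ ℕ, every X ∈ Sym_n(ℝ) and every orthogonal n×n matrix O; (ii) p_{kn}(I_k ⊗ X) = p_n(X) for all k, n ∈ ℕ and X ∈ Sym_n(ℝ); and (iii) sup_n deg p_n < ∞, where deg p_n is the total degree of p_n as a polynomial in the entries of X. -/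
noncomputable section

open scoped Matrix

/-- The ring 𝒯 of pure trace polynomials: `MvPolynomial.X j` stands for the symbol `Tr(x^j)`
(for `j ≥ 1`; the variable of index `0` is unused). -/
abbrev TP : Type := MvPolynomial ℕ ℝ

/-- The ring 𝔗 = 𝒯[x] of univariate trace polynomials. -/
abbrev TPoly : Type := Polynomial TP

/-- The symbol `T_j = Tr(x^j)`, with `T₀ = Tr(1) = 1`. -/
def Tj (j : ℕ) : TP := if j = 0 then 1 else MvPolynomial.X j

/-- The 𝒯-linear trace map `Tr : 𝔗 → 𝒯`, determined by `x^j ↦ T_j` and `Tr(1) = 1`. -/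
def TrF (f : TPoly) : TP := f.sum fun j c => c * Tj j

/-- The normalized trace moments `j ↦ (1/n)·tr(X^j)` of a matrix. -/
def nTr {n : ℕ} (X : Matrix (Fin n) (Fin n) ℝ) (j : ℕ) : ℝ := (n : ℝ)⁻¹ * (X ^ j).trace

/-- Evaluation of a pure trace polynomial at a matrix (`T_j ↦ (1/n)·tr(X^j)`). -/
def evalT {n : ℕ} (X : Matrix (Fin n) (Fin n) ℝ) (p : TP) : ℝ := MvPolynomial.eval (nTr X) p

/-- Evaluation of a trace polynomial at a symmetric matrix: substitute `X` for `x` and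
`(1/n)·tr(X^j)` for `T_j`. -/
def evalM {n : ℕ} (X : Matrix (Fin n) (Fin n) ℝ) (f : TPoly) : Matrix (Fin n) (Fin n) ℝ :=
  Polynomial.eval₂ ((Matrix.scalar (Fin n)).comp (MvPolynomial.eval (nTr X))) X f

/-- Membership in the preordering generated by `S` inside a commutative ring, where the
allowed squares are squares of elements of `Sq` (take `Sq = Set.univ` for the preordering in
the whole ring): the smallest set containing `S` and the squares of elements of `Sq` that is
closed under addition and multiplication. -/
inductive InPre {R : Type*} [CommRing R] (Sq : Set R) (S : Set R) : R → Prop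
  | of {s : R} : s ∈ S → InPre Sq S s
  | sq {r : R} : r ∈ Sq → InPre Sq S (r ^ 2)
  | add {a b : R} : InPre Sq S a → InPre Sq S b → InPre Sq S (a + b)
  | mul {a b : R} : InPre Sq S a → InPre Sq S b → InPre Sq S (a * b)

/-- The preordering Ω in 𝒯 generated by traces of squares of trace polynomials. -/
def Omega : TP → Prop := InPre Set.univ {p | ∃ g : TPoly, p = TrF (g ^ 2)}

/-- `σ_j(M)`: the coefficients of the characteristic polynomial,
`det(t·I − M) = t^m − σ₁(M) t^{m−1} + ⋯ + (−1)^m σ_m(M)`. -/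
def sigmaCoeff {R : Type*} [CommRing R] {m : ℕ} (j : ℕ) (M : Matrix (Fin m) (Fin m) R) : R :=
  (-1 : R) ^ j * M.charpoly.coeff (m - j)

/-- The Hankel matrix `Han_d` over 𝒯, with `(i,j)` entry `T_{i+j}` (0-indexed), `T₀ = 1`. -/
def HanT (d : ℕ) : Matrix (Fin (d+1)) (Fin (d+1)) TP := fun i j => Tj (i.val + j.val)

/-- Extension of a point `γ ∈ ℝ^{2d}` (where `γ i` is the value of `T_{i+1}`) to all indices,
with `T₀ ↦ 1`. -/
def extPt (d : ℕ) (γ : Fin (2*d) → ℝ) : ℕ → ℝ :=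
  fun j => if h : 0 < j ∧ j ≤ 2*d then γ ⟨j - 1, by omega⟩ else 1

/-- Evaluation `s[γ]` of `s ∈ 𝒯_{2d}` at `γ ∈ ℝ^{2d}`. -/
def evalPt (d : ℕ) (γ : Fin (2*d) → ℝ) (s : TP) : ℝ := MvPolynomial.eval (extPt d γ) s

/-- Evaluation `f[β]` of `f ∈ 𝔗_{2d}` at `β = (b₀, γ) ∈ ℝ^{1+2d}` (`x ↦ b₀`, `T_j ↦ γ_j`). -/
def evalPt' (d : ℕ) (b₀ : ℝ) (γ : Fin (2*d) → ℝ) (f : TPoly) : ℝ :=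
  Polynomial.eval₂ (MvPolynomial.eval (extPt d γ)) b₀ f

/-- The real Hankel matrix `Han_d[γ]`. -/
def hankelPt (d : ℕ) (γ : Fin (2*d) → ℝ) : Matrix (Fin (d+1)) (Fin (d+1)) ℝ :=
  fun i j => extPt d γ (i.val + j.val)

/-- The set `L_S ⊆ ℝ^{2d}`. -/
def LSet (d : ℕ) (S : Finset TP) : Set (Fin (2*d) → ℝ) :=
  {γ | (∀ s ∈ S, 0 ≤ evalPt d γ s) ∧ (hankelPt d γ).PosSemidef}


/-- `I_k ⊗ X`, reindexed to an ordinary `(k·n) × (k·n)` matrix. -/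
def IkKron (k : ℕ) {n : ℕ} (X : Matrix (Fin n) (Fin n) ℝ) : Matrix (Fin (k*n)) (Fin (k*n)) ℝ :=
  Matrix.reindex finProdFinEquiv finProdFinEquiv
    (Matrix.kroneckerMap (· * ·) (1 : Matrix (Fin k) (Fin k) ℝ) X)

namespace StmtAux
open MvPolynomial Matrix

/-! ### Conjugation -/

lemma conj_pow {n : ℕ} {O : Matrix (Fin n) (Fin n) ℝ} (hO : Oᵀ * O = 1)
    (X : Matrix (Fin n) (Fin n) ℝ) (j : ℕ) : (O * X * Oᵀ) ^ j = O * X ^ j * Oᵀ := by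
  have hO' : O * Oᵀ = 1 := mul_eq_one_comm.mp hO
  induction j with
  | zero => simpa [pow_zero] using hO'.symm
  | succ j ih =>
      rw [pow_succ, pow_succ, ih]
      calc O * X ^ j * Oᵀ * (O * X * Oᵀ) = O * X ^ j * (Oᵀ * O) * X * Oᵀ := by
            simp only [mul_assoc]
        _ = O * (X ^ j * X) * Oᵀ := by rw [hO]; simp only [mul_assoc, one_mul]

lemma trace_conj_pow {n : ℕ} {O : Matrix (Fin n) (Fin n) ℝ} (hO : Oᵀ * O = 1)
    (X : Matrix (Fin n) (Fin n) ℝ) (j : ℕ) :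
    ((O * X * Oᵀ) ^ j).trace = (X ^ j).trace := by
  rw [conj_pow hO, trace_mul_comm, ← mul_assoc, hO, one_mul]

lemma nTr_conj {n : ℕ} {O : Matrix (Fin n) (Fin n) ℝ} (hO : Oᵀ * O = 1)
    (X : Matrix (Fin n) (Fin n) ℝ) : nTr (O * X * Oᵀ) = nTr X := by
  funext j; unfold nTr; rw [trace_conj_pow hO]

lemma isSymm_conj {n : ℕ} {O X : Matrix (Fin n) (Fin n) ℝ} (hX : X.IsSymm) :
    (O * X * Oᵀ).IsSymm := by
  unfold Matrix.IsSymm at *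
  simp only [Matrix.transpose_mul, Matrix.transpose_transpose, hX, Matrix.mul_assoc]

/-! ### Kronecker ampliation -/

lemma kron_one_pow {k n : ℕ} (X : Matrix (Fin n) (Fin n) ℝ) (j : ℕ) :
    (Matrix.kroneckerMap (· * ·) (1 : Matrix (Fin k) (Fin k) ℝ) X) ^ j
      = Matrix.kroneckerMap (· * ·) (1 : Matrix (Fin k) (Fin k) ℝ) (X ^ j) := by
  induction j with
  | zero => simp [pow_zero, Matrix.one_kronecker_one]
  | succ j ih => rw [pow_succ, pow_succ, ih, ← Matrix.mul_kronecker_mul, Matrix.one_mul]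

lemma reindex_pow {m l : Type*} [Fintype m] [DecidableEq m] [Fintype l] [DecidableEq l]
    (e : m ≃ l) (M : Matrix m m ℝ) (j : ℕ) :
    (Matrix.reindex e e M) ^ j = Matrix.reindex e e (M ^ j) := by
  induction j with
  | zero => simp [pow_zero, Matrix.reindex_apply, Matrix.submatrix_one_equiv]
  | succ j ih =>
      rw [pow_succ, pow_succ, ih, Matrix.reindex_apply, Matrix.reindex_apply,
        Matrix.submatrix_mul_equiv _ _ _ e.symm, Matrix.reindex_apply]

lemma trace_reindex {m l : Type*} [Fintype m] [Fintype l] (e : m ≃ l) (M : Matrix m m ℝ) :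
    (Matrix.reindex e e M).trace = M.trace := by
  simp only [Matrix.trace, Matrix.reindex_apply, Matrix.diag, Matrix.submatrix_apply]
  exact Equiv.sum_comp e.symm (fun i => M i i)

lemma nTr_IkKron {k n : ℕ} (hk : 0 < k) (hn : 0 < n) (X : Matrix (Fin n) (Fin n) ℝ) :
    nTr (IkKron k X) = nTr X := by
  funext j
  unfold nTr IkKron
  rw [reindex_pow, trace_reindex, kron_one_pow, Matrix.trace_kronecker, Matrix.trace_one]
  have hk' : (k : ℝ) ≠ 0 := Nat.cast_ne_zero.mpr hk.ne'
  have hn' : (n : ℝ) ≠ 0 := Nat.cast_ne_zero.mpr hn.ne'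
  push_cast
  field_simp
  rw [Fintype.card_fin, mul_comm]

lemma isSymm_IkKron {k n : ℕ} {X : Matrix (Fin n) (Fin n) ℝ} (hX : X.IsSymm) :
    (IkKron k X).IsSymm := by
  unfold Matrix.IsSymm
  ext i j
  simp only [Matrix.transpose_apply, IkKron, Matrix.reindex_apply, Matrix.submatrix_apply,
    Matrix.kroneckerMap_apply]
  rw [Matrix.one_apply, Matrix.one_apply]
  have hx : ∀ a b, X a b = X b a := fun a b => congrFun (congrFun hX.symm a) b
  by_cases h : (finProdFinEquiv.symm j).1 = (finProdFinEquiv.symm i).1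
  · simp only [h, if_pos rfl, eq_comm (a := (finProdFinEquiv.symm i).1)]
    simp [h, hx]
  · rw [if_neg h, if_neg fun h' => h h'.symm]
    simp

lemma evalT_nTr_congr {n m : ℕ} {X : Matrix (Fin n) (Fin n) ℝ} {Y : Matrix (Fin m) (Fin m) ℝ}
    (h : nTr X = nTr Y) (F : TP) : evalT X F = evalT Y F := by
  unfold evalT; rw [h]

end StmtAux
-- continuation: degree helpers and forward direction
namespace StmtAux
open MvPolynomial Matrix

universe u v
variable {σ : Type u} {τ : Type v}

lemma totalDegree_aeval_le (g : σ → MvPolynomial τ ℝ) (w : σ → ℕ)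
    (hg : ∀ i, (g i).totalDegree ≤ w i) (p : MvPolynomial σ ℝ) :
    (aeval g p).totalDegree ≤ p.support.sup (fun m => m.sum fun i e => w i * e) := by
  rw [aeval_def, eval₂_eq]
  refine le_trans (totalDegree_finset_sum _ _) (Finset.sup_mono_fun ?_)
  intro d _
  refine le_trans (totalDegree_mul _ _) ?_
  have h1 : (algebraMap ℝ (MvPolynomial τ ℝ) (coeff d p)).totalDegree = 0 := totalDegree_C _
  rw [h1, zero_add]
  refine le_trans (totalDegree_finset_prod _ _) ?_
  rw [Finsupp.sum]
  refine Finset.sum_le_sum ?_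
  intro i _
  refine le_trans (totalDegree_pow _ _) ?_
  calc d i * (g i).totalDegree ≤ d i * w i := Nat.mul_le_mul_left _ (hg i)
    _ = w i * d i := Nat.mul_comm _ _

/-- the generic matrix -/
def Xm (n : ℕ) : Matrix (Fin n) (Fin n) (MvPolynomial (Fin n × Fin n) ℝ) :=
  Matrix.of fun i j => X (i, j)

lemma Xm_pow_entry_deg (n j : ℕ) (a b : Fin n) :
    ((Xm n ^ j) a b).totalDegree ≤ j := by
  induction j generalizing a b with
  | zero =>
      rw [pow_zero]
      by_cases h : a = b
      · simp [Matrix.one_apply, h]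
      · simp [Matrix.one_apply, h]
  | succ j ih =>
      rw [pow_succ, Matrix.mul_apply]
      refine le_trans (totalDegree_finset_sum _ _) ?_
      rw [Finset.sup_le_iff]
      intro c _
      refine le_trans (totalDegree_mul _ _) ?_
      have h2 : ((Xm n) c b).totalDegree ≤ 1 := by simp [Xm, totalDegree_X]
      have h3 := ih a c
      omega

lemma trace_map' {R S : Type*} [CommSemiring R] [CommSemiring S] {n : ℕ}
    (f : R →+* S) (M : Matrix (Fin n) (Fin n) R) : (M.map f).trace = f M.trace := by
  simp [Matrix.trace, Matrix.diag, map_sum, Matrix.map_apply]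

lemma eval_trace_Xm_pow {n : ℕ} (X : Matrix (Fin n) (Fin n) ℝ) (j : ℕ) :
    eval (fun q : Fin n × Fin n => X q.1 q.2) ((Xm n ^ j).trace) = (X ^ j).trace := by
  set f : MvPolynomial (Fin n × Fin n) ℝ →+* ℝ :=
    (MvPolynomial.eval (fun q : Fin n × Fin n => X q.1 q.2)) with hf
  have h1 : f.mapMatrix (Xm n) = X := by
    ext i k
    simp only [RingHom.mapMatrix_apply, Matrix.map_apply, hf, Xm, Matrix.of_apply, eval_X]
  have h2 : f.mapMatrix (Xm n ^ j) = X ^ j := by rw [map_pow, h1]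
  calc eval (fun q : Fin n × Fin n => X q.1 q.2) ((Xm n ^ j).trace)
      = f ((Xm n ^ j).trace) := rfl
    _ = ((Xm n ^ j).map f).trace := (trace_map' f _).symm
    _ = (X ^ j).trace := by rw [← RingHom.mapMatrix_apply, h2]

/-- evaluation of a composite `aeval` -/
lemma eval_aeval' {v : τ → ℝ} (g : σ → MvPolynomial τ ℝ) (p : MvPolynomial σ ℝ) :
    eval v (aeval g p) = eval (fun i => eval v (g i)) p := by
  have h := MvPolynomial.comp_aeval (φ := (aeval v : MvPolynomial τ ℝ →ₐ[ℝ] ℝ)) (f := g)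
  have h2 : ∀ q : MvPolynomial τ ℝ, (aeval v : MvPolynomial τ ℝ →ₐ[ℝ] ℝ) q = eval v q := by
    intro q; rw [aeval_def, eval]; simp [eval₂Hom]
  calc eval v (aeval g p) = (aeval v : MvPolynomial τ ℝ →ₐ[ℝ] ℝ) (aeval g p) := (h2 _).symm
    _ = aeval (fun i => (aeval v : MvPolynomial τ ℝ →ₐ[ℝ] ℝ) (g i)) p := by
        rw [← AlgHom.comp_apply, h]
    _ = aeval (fun i => eval v (g i)) p := by simp_rw [h2]
    _ = eval (fun i => eval v (g i)) p := by
        rw [aeval_def, eval]; simp [eval₂Hom]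

/-- Forward: the degree-bounded polynomial representation -/
lemma forward_deg (F : TP) (n : ℕ) (hn : 0 < n) :
    ∃ P : MvPolynomial (Fin n × Fin n) ℝ,
      P.totalDegree ≤ (F.support.sup fun m => m.sum fun j e => j * e) ∧
      ∀ X : Matrix (Fin n) (Fin n) ℝ, evalT X F = eval (fun q => X q.1 q.2) P := by
  refine ⟨aeval (fun j : ℕ => C ((n:ℝ)⁻¹) * (Xm n ^ j).trace) F, ?_, ?_⟩
  · refine le_trans (totalDegree_aeval_le _ (fun j => j) ?_ F) le_rfl
    intro j
    refine le_trans (totalDegree_mul _ _) ?_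
    rw [totalDegree_C, zero_add]
    refine le_trans (totalDegree_finset_sum _ _) ?_
    rw [Finset.sup_le_iff]
    intro a _
    exact Xm_pow_entry_deg n j a a
  · intro X
    rw [eval_aeval']
    unfold evalT
    have : (fun i => eval (fun q : Fin n × Fin n => X q.1 q.2) (C ((n:ℝ)⁻¹) * (Xm n ^ i).trace))
        = nTr X := by
      funext j
      rw [_root_.map_mul, eval_C, eval_trace_Xm_pow]
      rfl
    rw [this]

end StmtAux
-- chunk 3 : homogeneity helpers
namespace StmtAux
open MvPolynomial Matrix

universe u' v'
variable {σ : Type u'} {τ : Type v'}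

lemma esymm_isHomog (n k : ℕ) : (esymm (Fin n) ℝ k).IsHomogeneous k := by
  rw [esymm]
  rw [← mem_homogeneousSubmodule]
  refine Submodule.sum_mem _ ?_
  intro t ht
  rw [mem_homogeneousSubmodule]
  have := IsHomogeneous.prod t (fun i => (X i : MvPolynomial (Fin n) ℝ)) (fun _ => 1)
    (fun i _ => isHomogeneous_X ℝ i)
  have hcard : ∑ _i ∈ t, 1 = k := by
    rw [Finset.sum_const, smul_eq_mul, mul_one]
    exact (Finset.mem_powersetCard.mp ht).2
  rwa [hcard] at this

lemma aeval_isHomogeneous (g : σ → MvPolynomial τ ℝ) (w : σ → ℕ)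
    (hg : ∀ i, (g i).IsHomogeneous (w i)) (p : MvPolynomial σ ℝ) (d : ℕ)
    (hp : p.IsWeightedHomogeneous w d) : (aeval g p).IsHomogeneous d := by
  rw [← mem_homogeneousSubmodule]
  have hps : aeval g p = ∑ m ∈ p.support, aeval g (monomial m (coeff m p)) := by
    conv_lhs => rw [p.as_sum]
    rw [map_sum]
  rw [hps]
  refine Submodule.sum_mem _ ?_
  intro m hm
  rw [mem_homogeneousSubmodule, aeval_monomial]
  have hd : (Finsupp.weight w) m = d := hp (Finsupp.mem_support_iff.mp hm)
  have hprod : (m.prod fun i k => g i ^ k).IsHomogeneous ((Finsupp.weight w) m) := by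
    rw [Finsupp.prod, Finsupp.weight_apply, Finsupp.sum]
    refine IsHomogeneous.prod _ _ _ (fun i _ => ?_)
    have := (hg i).pow (m i)
    rwa [show w i * m i = m i • w i from Nat.mul_comm _ _] at this
  have := (isHomogeneous_C (σ := τ) (coeff m p)).mul hprod
  rw [zero_add, hd] at this
  rwa [algebraMap_eq]

lemma aeval_congr_on_vars {S : Type*} [CommSemiring S] [Algebra ℝ S]
    (p : MvPolynomial σ ℝ) (Pred : σ → Prop)
    (h : ∀ m ∈ p.support, ∀ i, m i ≠ 0 → Pred i) (g1 g2 : σ → S)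
    (hg : ∀ i, Pred i → g1 i = g2 i) : aeval g1 p = aeval g2 p := by
  rw [aeval_def, aeval_def, eval₂_eq, eval₂_eq]
  refine Finset.sum_congr rfl ?_
  intro d hd
  congr 1
  refine Finset.prod_congr rfl ?_
  intro i hi
  rw [hg i (h d hd i (Finsupp.mem_support_iff.mp hi))]

lemma le_weight_of_ne_zero' (w : σ → ℕ) (m : σ →₀ ℕ) {i : σ} (hi : m i ≠ 0) :
    w i ≤ (Finsupp.weight w) m := by
  rw [Finsupp.weight_apply, Finsupp.sum]
  have hmem : i ∈ m.support := Finsupp.mem_support_iff.mpr hi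
  calc w i ≤ m i • w i := by
        have : 1 ≤ m i := Nat.one_le_iff_ne_zero.mpr hi
        calc w i = 1 * w i := (one_mul _).symm
          _ ≤ m i * w i := Nat.mul_le_mul_right _ this
  _ ≤ ∑ j ∈ m.support, m j • w j := Finset.single_le_sum (f := fun j => m j • w j) (fun j _ => Nat.zero_le _) hmem

end StmtAux
-- chunk 4 : Newton identities, range lemmas, injectivity of the power-sum substitution
namespace StmtAux
open MvPolynomial Matrix

/-- elementary symmetric generators indexed by `Fin E` -/
def eso (E n : ℕ) : Fin E → MvPolynomial (Fin n) ℝ := fun i => esymm (Fin n) ℝ (i + 1)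

/-- power sum generators indexed by `Fin E` -/
def pso (E n : ℕ) : Fin E → MvPolynomial (Fin n) ℝ := fun i => psum (Fin n) ℝ (i + 1)

lemma esymm_mem_pso_range (E n : ℕ) : ∀ k, k ≤ E →
    esymm (Fin n) ℝ k ∈ (aeval (pso E n) : MvPolynomial (Fin E) ℝ →ₐ[ℝ] _).range := by
  intro k
  induction k using Nat.strong_induction_on with
  | _ k ih =>
    intro hk
    rcases Nat.eq_zero_or_pos k with rfl | hk0
    · rw [esymm_zero]; exact Subalgebra.one_mem _
    have hNewton := mul_esymm_eq_sum (Fin n) ℝ k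
    have hsum : ((-1 : MvPolynomial (Fin n) ℝ)) ^ (k + 1) *
        ∑ a ∈ Finset.filter (fun a => a.1 < k) (Finset.HasAntidiagonal.antidiagonal k),
          (-1) ^ a.1 * esymm (Fin n) ℝ a.1 * psum (Fin n) ℝ a.2 ∈
          (aeval (pso E n) : MvPolynomial (Fin E) ℝ →ₐ[ℝ] _).range := by
      refine Subalgebra.mul_mem _ ?_ ?_
      · exact Subalgebra.pow_mem _ (Subalgebra.neg_mem _ (Subalgebra.one_mem _)) _
      refine Subalgebra.sum_mem _ ?_
      intro a ha
      rw [Finset.mem_filter, Finset.HasAntidiagonal.mem_antidiagonal] at ha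
      refine Subalgebra.mul_mem _ (Subalgebra.mul_mem _ ?_ ?_) ?_
      · exact Subalgebra.pow_mem _ (Subalgebra.neg_mem _ (Subalgebra.one_mem _)) _
      · exact ih a.1 ha.2 (le_trans (le_of_lt ha.2) hk)
      · -- psum a.2  with 1 ≤ a.2 ≤ E
        have ha2 : 0 < a.2 := by omega
        have ha2E : a.2 ≤ E := by omega
        refine (AlgHom.mem_range _).mpr ⟨X ⟨a.2 - 1, by omega⟩, ?_⟩
        rw [aeval_X]
        unfold pso
        congr 1
        show a.2 - 1 + 1 = a.2
        omega
    rw [← hNewton] at hsum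
    have hinv : esymm (Fin n) ℝ k =
        C ((k : ℝ))⁻¹ * ((k : MvPolynomial (Fin n) ℝ) * esymm (Fin n) ℝ k) := by
      rw [← mul_assoc]
      have : (C ((k : ℝ))⁻¹ * (k : MvPolynomial (Fin n) ℝ)) = 1 := by
        rw [← C_eq_coe_nat, ← C_mul, inv_mul_cancel₀ (by exact_mod_cast hk0.ne'), C_1]
      rw [this, one_mul]
    rw [hinv]
    refine Subalgebra.mul_mem _ ?_ hsum
    exact Subalgebra.algebraMap_mem _ _

lemma psum_mem_eso_range (E n : ℕ) : ∀ k, 0 < k → k ≤ E →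
    psum (Fin n) ℝ k ∈ (aeval (eso E n) : MvPolynomial (Fin E) ℝ →ₐ[ℝ] _).range := by
  intro k
  induction k using Nat.strong_induction_on with
  | _ k ih =>
    intro hk0 hk
    have hesymm : ∀ j, j ≤ E → esymm (Fin n) ℝ j ∈
        (aeval (eso E n) : MvPolynomial (Fin E) ℝ →ₐ[ℝ] _).range := by
      intro j hj
      rcases Nat.eq_zero_or_pos j with rfl | hj0
      · rw [esymm_zero]; exact Subalgebra.one_mem _
      refine (AlgHom.mem_range _).mpr ⟨X ⟨j - 1, by omega⟩, ?_⟩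
      rw [aeval_X]
      unfold eso
      congr 1
      show j - 1 + 1 = j
      omega
    rw [psum_eq_mul_esymm_sub_sum (Fin n) ℝ k hk0]
    refine Subalgebra.sub_mem _ ?_ ?_
    · refine Subalgebra.mul_mem _ (Subalgebra.mul_mem _ ?_ ?_) (hesymm k hk)
      · exact Subalgebra.pow_mem _ (Subalgebra.neg_mem _ (Subalgebra.one_mem _)) _
      · rw [← C_eq_coe_nat]; exact Subalgebra.algebraMap_mem _ _
    · refine Subalgebra.sum_mem _ ?_
      intro a ha
      rw [Finset.mem_filter, Finset.HasAntidiagonal.mem_antidiagonal] at ha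
      obtain ⟨hsum', ha1⟩ := ha
      simp only [Set.mem_Ioo] at ha1
      refine Subalgebra.mul_mem _ (Subalgebra.mul_mem _ ?_ ?_) ?_
      · exact Subalgebra.pow_mem _ (Subalgebra.neg_mem _ (Subalgebra.one_mem _)) _
      · exact hesymm a.1 (by omega)
      · exact ih a.2 (by omega) (by omega) (by omega)

/-- a surjective ring endomorphism of a Noetherian (comm) ring is injective -/
lemma surj_ringEndo_inj {A : Type*} [CommRing A] [IsNoetherianRing A] (φ : A →+* A)
    (hs : Function.Surjective φ) : Function.Injective φ := by
  haveI : IsNoetherian A A := by rwa [← isNoetherianRing_iff]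
  let pw : ℕ → A →+* A := fun j => Nat.rec (RingHom.id A) (fun _ g => φ.comp g) j
  have hpw0 : pw 0 = RingHom.id A := rfl
  have hpws : ∀ j, pw (j + 1) = φ.comp (pw j) := fun j => rfl
  have hpw_surj : ∀ j, Function.Surjective (pw j) := by
    intro j
    induction j with
    | zero => exact fun a => ⟨a, rfl⟩
    | succ j ihj => rw [hpws]; exact hs.comp ihj
  have hmono : Monotone fun j => (RingHom.ker (pw j) : Submodule A A) := by
    refine monotone_nat_of_le_succ ?_
    intro j x hx
    have hx' : pw j x = 0 := RingHom.mem_ker.mp hx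
    refine RingHom.mem_ker.mpr ?_
    rw [hpws, RingHom.comp_apply, hx', map_zero]
  obtain ⟨N, hN⟩ := monotone_stabilizes_iff_noetherian.mpr inferInstance
    ⟨fun j => (RingHom.ker (pw j) : Submodule A A), hmono⟩
  rw [injective_iff_map_eq_zero]
  intro a ha
  obtain ⟨b, hb⟩ := hpw_surj N a
  have hbker : b ∈ RingHom.ker (pw (N + 1)) := by
    refine RingHom.mem_ker.mpr ?_
    rw [hpws, RingHom.comp_apply, hb, ha]
  have hEq : (RingHom.ker (pw N) : Submodule A A) = RingHom.ker (pw (N + 1)) :=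
    hN (N + 1) (Nat.le_succ N)
  have hbker' : b ∈ RingHom.ker (pw N) := by rw [hEq]; exact hbker
  rw [← hb]
  exact RingHom.mem_ker.mp hbker'

lemma alpha_inj (E n : ℕ) (hEn : E ≤ n) :
    Function.Injective (aeval (eso E n) : MvPolynomial (Fin E) ℝ →ₐ[ℝ] MvPolynomial (Fin n) ℝ) := by
  have hcard : E ≤ Fintype.card (Fin n) := by simpa using hEn
  have hinj := esymmAlgHom_injective (σ := Fin n) ℝ (n := E) hcard
  intro a b hab
  refine hinj ?_
  have : ∀ q : MvPolynomial (Fin E) ℝ,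
      ((esymmAlgHom (Fin n) ℝ E) q : MvPolynomial (Fin n) ℝ) = aeval (eso E n) q := by
    intro q; rw [esymmAlgHom_apply]; rfl
  exact Subtype.ext (by rw [this, this, hab])

lemma beta_inj (E n : ℕ) (hEn : E ≤ n) :
    Function.Injective (aeval (pso E n) : MvPolynomial (Fin E) ℝ →ₐ[ℝ] MvPolynomial (Fin n) ℝ) := by
  classical
  set α := (aeval (eso E n) : MvPolynomial (Fin E) ℝ →ₐ[ℝ] MvPolynomial (Fin n) ℝ) with hα
  set β := (aeval (pso E n) : MvPolynomial (Fin E) ℝ →ₐ[ℝ] MvPolynomial (Fin n) ℝ) with hβ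
  have hαinj := alpha_inj E n hEn
  have hP : ∀ i : Fin E, ∃ P : MvPolynomial (Fin E) ℝ, α P = psum (Fin n) ℝ (i + 1) := by
    intro i
    exact (AlgHom.mem_range _).mp (psum_mem_eso_range E n (i + 1) (Nat.succ_pos _) i.2)
  choose P hPdef using hP
  set φ := (aeval P : MvPolynomial (Fin E) ℝ →ₐ[ℝ] MvPolynomial (Fin E) ℝ) with hφ
  have hcomp : α.comp φ = β := by
    refine algHom_ext ?_
    intro i
    rw [AlgHom.comp_apply]
    simp only [hφ, aeval_X]
    rw [hPdef i]
    simp only [hβ, aeval_X, pso]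
  -- range α ⊆ range β
  have hrange : ∀ a : MvPolynomial (Fin E) ℝ, α a ∈ β.range := by
    intro a
    have h1 : α a ∈ α.range := ⟨a, rfl⟩
    have h2 : α.range ≤ β.range := by
      rw [hα, ← Algebra.adjoin_range_eq_range_aeval]
      refine Algebra.adjoin_le ?_
      rintro _ ⟨i, rfl⟩
      exact esymm_mem_pso_range E n (i + 1) i.2
    exact h2 h1
  have hφsurj : Function.Surjective φ := by
    intro a
    obtain ⟨b, hb⟩ := (AlgHom.mem_range _).mp (hrange a)
    refine ⟨b, hαinj ?_⟩
    have : α (φ b) = β b := by rw [← hcomp]; rfl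
    rw [this, hb]
  have hφinj : Function.Injective φ := surj_ringEndo_inj (φ : MvPolynomial (Fin E) ℝ →+* MvPolynomial (Fin E) ℝ) hφsurj
  have : ⇑β = ⇑α ∘ ⇑φ := by rw [← hcomp]; rfl
  rw [this]
  exact hαinj.comp hφinj

end StmtAux
-- chunk 5 : fundamental theorem of symmetric polynomials with degree control
namespace StmtAux
open MvPolynomial Matrix

lemma symm_rep (E n : ℕ) (hEn : E ≤ n) (Q : MvPolynomial (Fin n) ℝ)
    (hsym : Q.IsSymmetric) (hdeg : Q.totalDegree < E) :
    ∃ G : MvPolynomial (Fin E) ℝ, aeval (eso E n) G = Q := by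
  classical
  -- full representation
  have hsurj := esymmAlgHom_surjective (σ := Fin n) ℝ (n := n) (by simp)
  obtain ⟨G0, hG0⟩ := hsurj ⟨Q, hsym⟩
  have hG0' : aeval (fun i : Fin n => esymm (Fin n) ℝ ((i : ℕ) + 1)) G0 = Q := by
    have := congrArg Subtype.val hG0
    rwa [esymmAlgHom_apply] at this
  set w : Fin n → ℕ := fun i => (i : ℕ) + 1 with hw
  set αn := (aeval (fun i : Fin n => esymm (Fin n) ℝ ((i : ℕ) + 1)) :
      MvPolynomial (Fin n) ℝ →ₐ[ℝ] MvPolynomial (Fin n) ℝ) with hαn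
  have hαninj : Function.Injective αn := alpha_inj n n le_rfl
  -- weighted support bound
  have hsupp : ∀ m ∈ G0.support, (Finsupp.weight w) m ≤ Q.totalDegree := by
    intro m hm
    by_contra hgt
    push_neg at hgt
    set d := (Finsupp.weight w) m with hd
    -- the d-th weighted component of G0 is nonzero
    have hcomp_ne : weightedHomogeneousComponent w d G0 ≠ 0 := by
      intro h0
      have := coeff_weightedHomogeneousComponent (w := w) d G0 m
      rw [if_pos rfl, h0] at this
      exact (MvPolynomial.mem_support_iff.mp hm) (by simpa using this.symm)
    -- decomposition of G0 into weighted components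
    have hfin := weightedHomogeneousComponent_finsupp (w := w) G0
    have hdecomp : ∑ v ∈ hfin.toFinset, weightedHomogeneousComponent w v G0 = G0 := by
      rw [← finsum_eq_sum _ hfin, sum_weightedHomogeneousComponent]
    have hdmem : d ∈ hfin.toFinset := by
      exact (Set.Finite.mem_toFinset (hs := hfin)).mpr hcomp_ne
    -- apply homogeneousComponent d to Q
    have hQd : homogeneousComponent d Q = 0 :=
      homogeneousComponent_eq_zero d Q (lt_of_le_of_lt (le_refl _) hgt)
    have hQsum : Q = ∑ v ∈ hfin.toFinset, αn (weightedHomogeneousComponent w v G0) := by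
      rw [← map_sum, hdecomp, hαn, hG0']
    have hhomog : ∀ v, (αn (weightedHomogeneousComponent w v G0)).IsHomogeneous v := by
      intro v
      refine aeval_isHomogeneous _ w (fun i => ?_) _ v
        (weightedHomogeneousComponent_isWeightedHomogeneous v G0)
      exact esymm_isHomog n ((i : ℕ) + 1)
    have hpick : homogeneousComponent d Q = αn (weightedHomogeneousComponent w d G0) := by
      rw [hQsum, map_sum]
      rw [Finset.sum_eq_single d]
      · rw [homogeneousComponent_of_mem ((mem_homogeneousSubmodule _ _).mpr (hhomog d)),
          if_pos rfl]
      · intro v _ hvd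
        rw [homogeneousComponent_of_mem ((mem_homogeneousSubmodule _ _).mpr (hhomog v)),
          if_neg (fun h => hvd h.symm)]
      · intro hd'
        exact absurd hdmem hd'
    rw [hQd] at hpick
    exact hcomp_ne (hαninj (by rw [← hpick, map_zero]))
  -- variables appearing are small
  have hvars : ∀ m ∈ G0.support, ∀ i : Fin n, m i ≠ 0 → ((i : ℕ) + 1 ≤ Q.totalDegree) := by
    intro m hm i hi
    exact le_trans (le_weight_of_ne_zero' w m hi) (hsupp m hm)
  -- truncate
  set g' : Fin n → MvPolynomial (Fin E) ℝ :=
    fun i => if h : (i : ℕ) < E then X ⟨i, h⟩ else 0 with hg'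
  refine ⟨aeval g' G0, ?_⟩
  have hcomp2 : aeval (eso E n) (aeval g' G0) = aeval (fun i => aeval (eso E n) (g' i)) G0 := by
    rw [← AlgHom.comp_apply, comp_aeval]
  rw [hcomp2]
  rw [← hG0']
  refine aeval_congr_on_vars G0 (fun i : Fin n => (i : ℕ) + 1 ≤ Q.totalDegree) hvars _ _ ?_
  intro i hi
  have hiE : (i : ℕ) < E := by omega
  rw [hg']
  simp only [dif_pos hiE]
  rw [aeval_X]
  unfold eso
  rfl

end StmtAux
-- chunk 6 : spectral theorem, permutations, and the per-size representation
namespace StmtAux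
open MvPolynomial Matrix

lemma exists_spectral {n : ℕ} (X : Matrix (Fin n) (Fin n) ℝ) (hX : X.IsSymm) :
    ∃ (O : Matrix (Fin n) (Fin n) ℝ) (lam : Fin n → ℝ),
      Oᵀ * O = 1 ∧ X = O * Matrix.diagonal lam * Oᵀ := by
  have hherm : X.IsHermitian := by
    rw [Matrix.IsHermitian, Matrix.conjTranspose_eq_transpose_of_trivial]; exact hX
  refine ⟨(hherm.eigenvectorUnitary : Matrix (Fin n) (Fin n) ℝ), hherm.eigenvalues, ?_, ?_⟩
  · have h := (Unitary.mem_iff.mp hherm.eigenvectorUnitary.2).1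
    rwa [Matrix.star_eq_conjTranspose, Matrix.conjTranspose_eq_transpose_of_trivial] at h
  · have h := hherm.spectral_theorem
    rwa [Unitary.conjStarAlgAut_apply, Matrix.star_eq_conjTranspose, Matrix.conjTranspose_eq_transpose_of_trivial,
      show (RCLike.ofReal ∘ hherm.eigenvalues : Fin n → ℝ) = hherm.eigenvalues from rfl] at h

lemma diag_perm {n : ℕ} (lam : Fin n → ℝ) (σp : Equiv.Perm (Fin n)) :
    ∃ P : Matrix (Fin n) (Fin n) ℝ, Pᵀ * P = 1 ∧
      Matrix.diagonal (lam ∘ σp) = P * Matrix.diagonal lam * Pᵀ := by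
  refine ⟨(1 : Matrix (Fin n) (Fin n) ℝ).submatrix ⇑σp id, ?_, ?_⟩
  · rw [Matrix.transpose_submatrix, Matrix.transpose_one]
    have := Matrix.submatrix_mul_equiv (1 : Matrix (Fin n) (Fin n) ℝ)
      (1 : Matrix (Fin n) (Fin n) ℝ) id σp id
    rw [this, Matrix.one_mul, Matrix.submatrix_id_id]
  · have h1 : Matrix.diagonal (lam ∘ σp) = (Matrix.diagonal lam).submatrix ⇑σp ⇑σp := by
      ext i j
      by_cases h : i = j
      · simp [h, Matrix.diagonal_apply, Matrix.submatrix_apply]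
      · have h2 : ¬ (σp i = σp j) := fun hc => h (σp.injective hc)
        simp [Matrix.diagonal_apply, Matrix.submatrix_apply, h, h2]
    have h2 : (Matrix.diagonal lam) * ((1 : Matrix (Fin n) (Fin n) ℝ).submatrix ⇑σp id)ᵀ
        = (Matrix.diagonal lam).submatrix id ⇑σp := by
      rw [Matrix.transpose_submatrix, Matrix.transpose_one]
      have := Matrix.submatrix_mul_equiv (Matrix.diagonal lam)
        (1 : Matrix (Fin n) (Fin n) ℝ) id (Equiv.refl (Fin n)) ⇑σp
      simp only [Equiv.coe_refl, Matrix.submatrix_id_id, Matrix.mul_one] at this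
      exact this
    have h3 : ((1 : Matrix (Fin n) (Fin n) ℝ).submatrix ⇑σp id) *
        ((Matrix.diagonal lam).submatrix id ⇑σp)
        = (Matrix.diagonal lam).submatrix ⇑σp ⇑σp := by
      have := Matrix.submatrix_mul_equiv (1 : Matrix (Fin n) (Fin n) ℝ)
        (Matrix.diagonal lam) ⇑σp (Equiv.refl (Fin n)) ⇑σp
      simp only [Equiv.coe_refl, Matrix.one_mul] at this
      exact this
    rw [h1, Matrix.mul_assoc, h2, h3]

/-- scaled embedding of an `E`-variable polynomial into `TP`, `Xᵢ ↦ c·T_{i+1}` -/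
def iota (E : ℕ) (c : ℝ) (A : MvPolynomial (Fin E) ℝ) : TP :=
  aeval (fun i : Fin E => MvPolynomial.C c * MvPolynomial.X ((i : ℕ) + 1)) A

lemma evalT_iota {n E : ℕ} (c : ℝ) (A : MvPolynomial (Fin E) ℝ)
    (X : Matrix (Fin n) (Fin n) ℝ) :
    evalT X (iota E c A) = eval (fun i : Fin E => c * nTr X ((i : ℕ) + 1)) A := by
  unfold evalT iota
  rw [eval_aeval']
  have hfun : (fun i : Fin E => eval (nTr X) (C c * MvPolynomial.X ((i : ℕ) + 1)))
      = fun i : Fin E => c * nTr X ((i : ℕ) + 1) := by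
    funext i
    rw [_root_.map_mul, eval_C, eval_X]
  rw [hfun]

lemma eval_psum_diag {n : ℕ} (lam : Fin n → ℝ) (j : ℕ) :
    eval lam (psum (Fin n) ℝ j) = ((Matrix.diagonal lam) ^ j).trace := by
  rw [Matrix.diagonal_pow, Matrix.trace_diagonal, psum]
  simp [eval_sum]

lemma trace_pow_spectral {n : ℕ} {O X : Matrix (Fin n) (Fin n) ℝ} {lam : Fin n → ℝ}
    (hO : Oᵀ * O = 1) (hXd : X = O * Matrix.diagonal lam * Oᵀ) (j : ℕ) :
    (X ^ j).trace = eval lam (psum (Fin n) ℝ j) := by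
  rw [hXd, trace_conj_pow hO, ← eval_psum_diag]

/-- The key per-size lemma: an orthogonally invariant polynomial function on symmetric
`n × n` matrices of degree `< E ≤ n` is a polynomial in the traces of the first `E` powers. -/
lemma exists_good (E n : ℕ) (hEn : E ≤ n)
    (p : Matrix (Fin n) (Fin n) ℝ → ℝ)
    (hinv : ∀ X : Matrix (Fin n) (Fin n) ℝ, X.IsSymm →
      ∀ O : Matrix (Fin n) (Fin n) ℝ, Oᵀ * O = 1 → p (O * X * Oᵀ) = p X)
    (P : MvPolynomial (Fin n × Fin n) ℝ) (hPdeg : P.totalDegree < E)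
    (hP : ∀ X : Matrix (Fin n) (Fin n) ℝ, X.IsSymm → p X = eval (fun q => X q.1 q.2) P) :
    ∃ A : MvPolynomial (Fin E) ℝ,
      ∀ X : Matrix (Fin n) (Fin n) ℝ, X.IsSymm →
        p X = eval (fun i : Fin E => (X ^ ((i : ℕ) + 1)).trace) A := by
  classical
  set Qd : MvPolynomial (Fin n) ℝ :=
    aeval (fun q : Fin n × Fin n => if q.1 = q.2 then X q.1 else 0) P with hQd
  have hQdeval : ∀ lam : Fin n → ℝ, eval lam Qd = p (Matrix.diagonal lam) := by
    intro lam
    rw [hQd, eval_aeval', hP (Matrix.diagonal lam) (Matrix.isSymm_diagonal lam)]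
    have hfun : (fun q : Fin n × Fin n =>
        eval lam (if q.1 = q.2 then (MvPolynomial.X q.1 : MvPolynomial (Fin n) ℝ) else 0))
        = fun q : Fin n × Fin n => Matrix.diagonal lam q.1 q.2 := by
      funext q
      by_cases h : q.1 = q.2
      · simp [h, Matrix.diagonal_apply]
      · simp [h, Matrix.diagonal_apply]
    rw [hfun]
  have hQdeg : Qd.totalDegree < E := by
    refine lt_of_le_of_lt ?_ hPdeg
    have := totalDegree_aeval_le
      (fun q : Fin n × Fin n => if q.1 = q.2 then (X q.1 : MvPolynomial (Fin n) ℝ) else 0)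
      (fun _ => 1) ?_ P
    · refine le_trans this ?_
      rw [totalDegree]
      refine Finset.sup_mono_fun ?_
      intro m _
      simp [one_mul]
    · intro q
      by_cases h : q.1 = q.2
      · simp [h, totalDegree_X]
      · simp [h]
  have hQsym : Qd.IsSymmetric := by
    intro σp
    refine MvPolynomial.funext ?_
    intro lam
    rw [eval_rename, hQdeval, hQdeval]
    obtain ⟨P', hP'O, hP'd⟩ := diag_perm lam σp
    rw [hP'd]
    exact hinv (Matrix.diagonal lam) (Matrix.isSymm_diagonal lam) P' hP'O
  obtain ⟨G, hG⟩ := symm_rep E n hEn Qd hQsym hQdeg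
  have hB : ∀ i : Fin E, ∃ B : MvPolynomial (Fin E) ℝ,
      aeval (pso E n) B = esymm (Fin n) ℝ ((i : ℕ) + 1) := by
    intro i
    exact (AlgHom.mem_range _).mp (esymm_mem_pso_range E n ((i : ℕ) + 1) i.2)
  choose B hBdef using hB
  refine ⟨aeval B G, ?_⟩
  have hβA : aeval (pso E n) (aeval B G) = Qd := by
    rw [← AlgHom.comp_apply, comp_aeval]
    rw [← hG]
    have hfun : (fun i : Fin E => aeval (pso E n) (B i)) = eso E n := by
      funext i
      rw [hBdef i]
      rfl
    rw [hfun]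
  intro X hX
  obtain ⟨O, lam, hO, hXd⟩ := exists_spectral X hX
  have hdiag : p X = p (Matrix.diagonal lam) := by
    rw [hXd]
    exact hinv (Matrix.diagonal lam) (Matrix.isSymm_diagonal lam) O hO
  rw [hdiag, ← hQdeval, ← hβA, eval_aeval']
  have hfun : (fun i : Fin E => eval lam (pso E n i))
      = fun i : Fin E => (X ^ ((i : ℕ) + 1)).trace := by
    funext i
    rw [show pso E n i = psum (Fin n) ℝ ((i : ℕ) + 1) from rfl,
      ← trace_pow_spectral hO hXd]
  rw [hfun]

end StmtAux
-- chunk 7 : stability across sizes and final assembly helpers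
namespace StmtAux
open MvPolynomial Matrix

lemma isSymm_reindex {a b : ℕ} (e : Fin a ≃ Fin b) {X : Matrix (Fin a) (Fin a) ℝ}
    (hX : X.IsSymm) : (Matrix.reindex e e X).IsSymm := by
  unfold Matrix.IsSymm at *
  rw [Matrix.reindex_apply, Matrix.transpose_submatrix, hX]

lemma trace_IkKron_pow {k n : ℕ} (X : Matrix (Fin n) (Fin n) ℝ) (j : ℕ) :
    ((IkKron k X) ^ j).trace = (k : ℝ) * (X ^ j).trace := by
  unfold IkKron
  rw [reindex_pow, trace_reindex, kron_one_pow, Matrix.trace_kronecker, Matrix.trace_one]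
  simp

lemma p_cast (p : ∀ n : ℕ, Matrix (Fin n) (Fin n) ℝ → ℝ) {a b : ℕ} (h : a = b)
    (Y : Matrix (Fin a) (Fin a) ℝ) :
    p b (Matrix.reindex (finCongr h) (finCongr h) Y) = p a Y := by
  subst h
  have : Matrix.reindex (finCongr rfl) (finCongr rfl) Y = Y := by
    ext i j
    simp [Matrix.reindex_apply, Matrix.submatrix_apply]
  rw [this]

lemma trace_pow_reindex {a b : ℕ} (e : Fin a ≃ Fin b) (Y : Matrix (Fin a) (Fin a) ℝ) (j : ℕ) :
    ((Matrix.reindex e e Y) ^ j).trace = (Y ^ j).trace := by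
  rw [reindex_pow, trace_reindex]

lemma stability (E : ℕ) {k : ℕ}
    (A A' : MvPolynomial (Fin E) ℝ)
    (hAgree : ∀ lam : Fin E → ℝ,
      eval (fun i : Fin E => ((Matrix.diagonal lam) ^ ((i : ℕ) + 1)).trace) A
        = eval (fun i : Fin E => (k : ℝ) * ((Matrix.diagonal lam) ^ ((i : ℕ) + 1)).trace) A') :
    iota E (E : ℝ) A = iota E ((k : ℝ) * (E : ℝ)) A' := by
  have hcomp : aeval (pso E E) (aeval (fun i : Fin E => C (k : ℝ) * X i) A')
      = aeval (fun i : Fin E => C (k : ℝ) * pso E E i) A' := by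
    rw [← AlgHom.comp_apply, comp_aeval]
    have hfun : (fun i : Fin E => aeval (pso E E) (C (k : ℝ) * X i))
        = fun i : Fin E => C (k : ℝ) * pso E E i := by
      funext i
      rw [_root_.map_mul, aeval_X, aeval_C]
      rfl
    rw [hfun]
  have h1 : aeval (pso E E) A = aeval (pso E E) (aeval (fun i : Fin E => C (k : ℝ) * X i) A') := by
    refine MvPolynomial.funext ?_
    intro lam
    rw [hcomp, eval_aeval' (pso E E), eval_aeval' (fun i : Fin E => C (k : ℝ) * pso E E i)]
    have hL : (fun i : Fin E => eval lam (pso E E i))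
        = fun i : Fin E => ((Matrix.diagonal lam) ^ ((i : ℕ) + 1)).trace := by
      funext i
      exact eval_psum_diag lam ((i : ℕ) + 1)
    have hR : (fun i : Fin E => eval lam (C (k : ℝ) * pso E E i))
        = fun i : Fin E => (k : ℝ) * ((Matrix.diagonal lam) ^ ((i : ℕ) + 1)).trace := by
      funext i
      rw [_root_.map_mul, eval_C,
        show eval lam (pso E E i) = eval lam (psum (Fin E) ℝ ((i : ℕ) + 1)) from rfl,
        eval_psum_diag]
    rw [hL, hR]
    exact hAgree lam
  have h2 : A = aeval (fun i : Fin E => C (k : ℝ) * X i) A' := beta_inj E E le_rfl h1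
  rw [h2]
  unfold iota
  rw [← AlgHom.comp_apply, comp_aeval]
  have hfun : (fun i : Fin E =>
      aeval (fun i : Fin E => C (E : ℝ) * MvPolynomial.X ((i : ℕ) + 1)) (C (k : ℝ) * X i))
      = fun i : Fin E => C ((k : ℝ) * (E : ℝ)) * MvPolynomial.X ((i : ℕ) + 1) := by
    funext i
    rw [_root_.map_mul, aeval_X, aeval_C]
    rw [show (algebraMap ℝ TP) (k : ℝ) = C (k : ℝ) from rfl, ← mul_assoc, ← C_mul]
  rw [hfun]

end StmtAux

open StmtAux MvPolynomial Matrix in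
/-- A sequence of polynomial functions on symmetric matrices is given by a single pure trace
polynomial iff it is invariant under orthogonal conjugation, respects ampliations, and has
uniformly bounded degrees. -/
theorem stmt_3 (p : ∀ n : ℕ, Matrix (Fin n) (Fin n) ℝ → ℝ)
    (hpoly : ∀ n, 0 < n → ∃ P : MvPolynomial (Fin n × Fin n) ℝ,
        ∀ X : Matrix (Fin n) (Fin n) ℝ, X.IsSymm →
          p n X = MvPolynomial.eval (fun q => X q.1 q.2) P) :
    (∃ F : TP, ∀ n, 0 < n → ∀ X : Matrix (Fin n) (Fin n) ℝ, X.IsSymm → p n X = evalT X F) ↔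
      ((∀ n, 0 < n → ∀ X : Matrix (Fin n) (Fin n) ℝ, X.IsSymm →
          ∀ O : Matrix (Fin n) (Fin n) ℝ, Oᵀ * O = 1 →
            p n (O * X * Oᵀ) = p n X) ∧
       (∀ k n, 0 < k → 0 < n → ∀ X : Matrix (Fin n) (Fin n) ℝ, X.IsSymm →
          p (k * n) (IkKron k X) = p n X) ∧
       (∃ D : ℕ, ∀ n, 0 < n → ∃ P : MvPolynomial (Fin n × Fin n) ℝ,
          P.totalDegree ≤ D ∧
          ∀ X : Matrix (Fin n) (Fin n) ℝ, X.IsSymm →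
            p n X = MvPolynomial.eval (fun q => X q.1 q.2) P)) := by
  constructor
  · rintro ⟨F, hF⟩
    refine ⟨?_, ?_, ?_⟩
    · intro n hn X hX O hO
      rw [hF n hn _ (isSymm_conj hX), hF n hn X hX]
      unfold evalT
      rw [nTr_conj hO]
    · intro k n hk hn X hX
      rw [hF (k * n) (Nat.mul_pos hk hn) _ (isSymm_IkKron hX), hF n hn X hX]
      exact evalT_nTr_congr (nTr_IkKron hk hn X) F
    · refine ⟨F.support.sup (fun m => m.sum fun j e => j * e), ?_⟩
      intro n hn
      obtain ⟨P, hPdeg, hPeval⟩ := forward_deg F n hn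
      exact ⟨P, hPdeg, fun X hX => by rw [hF n hn X hX, hPeval X]⟩
  · rintro ⟨h1, h2, D0, hdeg⟩
    set E := D0 + 1 with hE
    have hE0 : 0 < E := Nat.succ_pos _
    have hgood : ∀ n : ℕ, E ≤ n → ∃ A : MvPolynomial (Fin E) ℝ,
        ∀ X : Matrix (Fin n) (Fin n) ℝ, X.IsSymm →
          p n X = eval (fun i : Fin E => (X ^ ((i : ℕ) + 1)).trace) A := by
      intro n hn
      have hnpos : 0 < n := lt_of_lt_of_le hE0 hn
      obtain ⟨P, hPdeg, hP⟩ := hdeg n hnpos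
      exact exists_good E n hn (p n) (fun X hX O hO => h1 n hnpos X hX O hO) P (by omega) hP
    choose A hA using hgood
    refine ⟨iota E (E : ℝ) (A E le_rfl), ?_⟩
    intro m hm X hX
    set N := E * m with hN
    have hEN : E ≤ N := Nat.le_mul_of_pos_right E hm
    have hNpos : 0 < N := Nat.mul_pos hE0 hm
    have hamp := h2 E m hE0 hm X hX
    -- value of p at the ampliation via `A N`
    have hval : p N (IkKron E X) = evalT (IkKron E X) (iota E (N : ℝ) (A N hEN)) := by
      rw [hA N hEN _ (isSymm_IkKron hX), evalT_iota]
      have hfun : (fun i : Fin E => ((IkKron E X) ^ ((i : ℕ) + 1)).trace)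
          = fun i : Fin E => (N : ℝ) * nTr (IkKron E X) ((i : ℕ) + 1) := by
        funext i
        unfold nTr
        rw [← mul_assoc, mul_inv_cancel₀ (Nat.cast_ne_zero.mpr hNpos.ne'), one_mul]
      rw [hfun]
    -- stability between sizes E and N
    have hAgree : ∀ lam : Fin E → ℝ,
        eval (fun i : Fin E => ((Matrix.diagonal lam) ^ ((i : ℕ) + 1)).trace) (A E le_rfl)
          = eval (fun i : Fin E => (m : ℝ) * ((Matrix.diagonal lam) ^ ((i : ℕ) + 1)).trace)
              (A N hEN) := by
      intro lam
      have hsymdiag : (Matrix.diagonal lam).IsSymm := Matrix.isSymm_diagonal lam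
      have hammE := h2 m E hm hE0 (Matrix.diagonal lam) hsymdiag
      -- transport (m * E) to N = E * m
      have hcast : (m * E) = N := by rw [hN]; exact Nat.mul_comm m E
      set Z := IkKron m (Matrix.diagonal lam) with hZ
      set Y' := Matrix.reindex (finCongr hcast) (finCongr hcast) Z with hY'
      have hpY' : p N Y' = p (m * E) Z := p_cast p hcast Z
      have hY'symm : Y'.IsSymm := isSymm_reindex _ (isSymm_IkKron hsymdiag)
      have htrY' : ∀ j, (Y' ^ j).trace = (m : ℝ) * ((Matrix.diagonal lam) ^ j).trace := by
        intro j
        rw [hY', trace_pow_reindex, hZ, trace_IkKron_pow]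
      calc eval (fun i : Fin E => ((Matrix.diagonal lam) ^ ((i : ℕ) + 1)).trace) (A E le_rfl)
          = p E (Matrix.diagonal lam) := (hA E le_rfl _ hsymdiag).symm
        _ = p (m * E) Z := hammE.symm
        _ = p N Y' := hpY'.symm
        _ = eval (fun i : Fin E => (Y' ^ ((i : ℕ) + 1)).trace) (A N hEN) := hA N hEN Y' hY'symm
        _ = eval (fun i : Fin E => (m : ℝ) * ((Matrix.diagonal lam) ^ ((i : ℕ) + 1)).trace)
              (A N hEN) := by
            have : (fun i : Fin E => (Y' ^ ((i : ℕ) + 1)).trace)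
                = fun i : Fin E => (m : ℝ) * ((Matrix.diagonal lam) ^ ((i : ℕ) + 1)).trace := by
              funext i
              exact htrY' _
            rw [this]
    have hstab : iota E (E : ℝ) (A E le_rfl) = iota E ((m : ℝ) * (E : ℝ)) (A N hEN) :=
      stability E (A E le_rfl) (A N hEN) hAgree
    have hcN : ((m : ℝ) * (E : ℝ)) = (N : ℝ) := by
      rw [hN]
      push_cast
      ring
    calc p m X = p N (IkKron E X) := hamp.symm
      _ = evalT (IkKron E X) (iota E (N : ℝ) (A N hEN)) := hval
      _ = evalT X (iota E (N : ℝ) (A N hEN)) := evalT_nTr_congr (nTr_IkKron hE0 hm X) _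
      _ = evalT X (iota E (E : ℝ) (A E le_rfl)) := by rw [hstab, hcN]

end
end

section
/- For every d ∈ ℕ and every j with 1 ≤ j ≤ d, there exist ω₁, ω₂ ∈ Ω with ω₂ ≠ 0 such that ω₂ · σ_j(Han_d) = ω₁; that is, σ_j(Han_d) is a quotient of elements of Ω. -/
noncomputable section

-- ===== auxiliary machinery =====
open Matrix in
theorem _dummy_open_check : True := trivial

open Polynomial in
lemma TrF_add (p q : TPoly) : TrF (p + q) = TrF p + TrF q := by
  unfold TrF
  exact Polynomial.sum_add_index p q _ (by simp) (by intros; ring)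

lemma TrF_zero : TrF 0 = 0 := by
  unfold TrF; exact Polynomial.sum_zero_index _

lemma TrF_Cmul (c : TP) (p : TPoly) : TrF (Polynomial.C c * p) = c * TrF p := by
  unfold TrF
  rw [← Polynomial.smul_eq_C_mul]
  rw [Polynomial.sum_smul_index p c _ (fun i => by simp)]
  rw [Polynomial.sum_def, Polynomial.sum_def, Finset.mul_sum]
  exact Finset.sum_congr rfl fun i _ => by ring

lemma TrF_sum {α : Type*} (s : Finset α) (p : α → TPoly) :
    TrF (∑ i ∈ s, p i) = ∑ i ∈ s, TrF (p i) := by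
  classical
  induction s using Finset.induction with
  | empty => simpa using TrF_zero
  | insert _ _ h ih => rw [Finset.sum_insert h, Finset.sum_insert h, TrF_add, ih]

lemma TrF_X_pow (n : ℕ) : TrF ((Polynomial.X : TPoly) ^ n) = Tj n := by
  unfold TrF
  rw [Polynomial.X_pow_eq_monomial]
  rw [Polynomial.sum_monomial_index 1 _ (by simp)]
  ring

lemma omega_sq (r : TP) : Omega (r ^ 2) := InPre.sq trivial

lemma omega_one : Omega 1 := by simpa using omega_sq 1

lemma omega_zero : Omega 0 := by
  have := omega_sq 0
  simpa using this

/-- Gram matrix of a family of trace polynomials w.r.t. the trace form. -/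
def Gmat {k : ℕ} (f : Fin k → TPoly) : Matrix (Fin k) (Fin k) TP :=
  Matrix.of fun a b => TrF (f a * f b)

lemma gram_step (k : ℕ) (f : Fin (k+1) → TPoly) :
    ∃ g : TPoly, TrF (g ^ 2) = (Gmat fun i : Fin k => f i.castSucc).det * (Gmat f).det := by
  classical
  set M := Gmat f with hM
  set a : Fin (k+1) → TP := fun i => M.adjugate i (Fin.last k) with ha
  refine ⟨∑ i, Polynomial.C (a i) * f i, ?_⟩
  have h1 : (∑ i, Polynomial.C (a i) * f i) ^ 2
      = ∑ i, ∑ j, Polynomial.C (a i * a j) * (f i * f j) := by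
    rw [sq, Finset.sum_mul_sum]
    refine Finset.sum_congr rfl fun i _ => Finset.sum_congr rfl fun j _ => ?_
    rw [map_mul]; ring
  rw [h1, TrF_sum]
  have h2 : ∀ i, TrF (∑ j, Polynomial.C (a i * a j) * (f i * f j))
      = ∑ j, (a i * a j) * M i j := by
    intro i
    rw [TrF_sum]
    exact Finset.sum_congr rfl fun j _ => TrF_Cmul _ _
  simp only [h2]
  have h3 : ∀ i, ∑ j, M i j * a j = M.det * (if i = Fin.last k then 1 else 0) := by
    intro i
    have h := congrFun (congrFun (Matrix.mul_adjugate M) i) (Fin.last k)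
    rw [Matrix.mul_apply] at h
    rw [h]
    simp [Matrix.smul_apply, Matrix.one_apply]
  have h4 : ∑ i, ∑ j, (a i * a j) * M i j = a (Fin.last k) * M.det := by
    have : ∀ i, ∑ j, (a i * a j) * M i j = a i * (M.det * (if i = Fin.last k then 1 else 0)) := by
      intro i
      rw [← h3 i, Finset.mul_sum]
      exact Finset.sum_congr rfl fun j _ => by ring
    simp only [this, mul_ite, mul_one, mul_zero]
    rw [Finset.sum_ite_eq' Finset.univ (Fin.last k) (fun i => a i * M.det)]
    simp
  rw [h4]
  have h5 : a (Fin.last k) = (Gmat fun i : Fin k => f i.castSucc).det := by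
    simp only [ha]
    rw [Matrix.adjugate_apply, Matrix.det_succ_row _ (Fin.last k)]
    rw [Finset.sum_eq_single (Fin.last k)]
    · rw [Matrix.updateRow_self]
      simp only [Pi.single_eq_same]
      rw [Fin.succAbove_last]
      have hsub : ((M.updateRow (Fin.last k) (Pi.single (Fin.last k) 1)).submatrix
          Fin.castSucc Fin.castSucc) = Gmat fun i : Fin k => f i.castSucc := by
        ext p q
        rw [Matrix.submatrix_apply, Matrix.updateRow_ne (Fin.castSucc_lt_last p).ne]
        rfl
      rw [hsub]
      have : (-1 : TP) ^ ((Fin.last k : ℕ) + (Fin.last k : ℕ)) = 1 := by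
        rw [← two_mul, pow_mul]; norm_num
      rw [this, one_mul, one_mul]
    · intro b _ hb
      rw [Matrix.updateRow_self]
      rw [Pi.single_eq_of_ne hb]
      ring
    · simp
  rw [h5]

lemma gram_entry (k : ℕ) (e : Fin k → ℕ) (a b : Fin k) :
    (Gmat fun i => (Polynomial.X : TPoly) ^ (e i)) a b = Tj (e a + e b) := by
  show TrF (Polynomial.X ^ (e a) * Polynomial.X ^ (e b)) = _
  rw [← pow_add, TrF_X_pow]

lemma gram_ne_zero (k : ℕ) (e : Fin k → ℕ) (he : Function.Injective e) :
    (Gmat fun i => (Polynomial.X : TPoly) ^ (e i)).det ≠ 0 := by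
  classical
  rcases Nat.eq_zero_or_pos k with rfl | hk
  · rw [Matrix.det_isEmpty]; exact one_ne_zero
  set N : ℕ := (Finset.univ.sup e) + 1 with hN
  have hN0 : (N : ℝ) ≠ 0 := by positivity
  set lam : Fin N → ℝ := fun i => (i : ℝ) + 1 with hlam
  have hlaminj : Function.Injective lam := by
    intro i j hij
    simp only [hlam, add_left_inj] at hij
    exact Fin.ext (Nat.cast_injective hij)
  set μ : ℕ → ℝ := fun m => (N:ℝ)⁻¹ * ∑ i : Fin N, lam i ^ m with hμ
  set φ : TP →+* ℝ := MvPolynomial.eval μ with hφ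
  have hTj : ∀ m, φ (Tj m) = μ m := by
    intro m
    by_cases hm : m = 0
    · subst hm
      have h1 : Tj 0 = 1 := if_pos rfl
      rw [h1, map_one, hμ]
      simp only []
      simp only [pow_zero, Finset.sum_const, Finset.card_univ, Fintype.card_fin, nsmul_eq_mul,
        mul_one]
      rw [inv_mul_cancel₀ hN0]
    · simp [Tj, hm, hφ, MvPolynomial.eval_X]
  set A : Matrix (Fin k) (Fin k) ℝ := Matrix.of fun a b => μ (e a + e b) with hA
  have hdet : φ ((Gmat fun i => (Polynomial.X : TPoly) ^ (e i)).det) = A.det := by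
    rw [RingHom.map_det]
    congr 1
    ext a b
    rw [RingHom.mapMatrix_apply, Matrix.map_apply, gram_entry, hTj]
    rfl
  have hAdet : A.det ≠ 0 := by
    set B : Matrix (Fin N) (Fin k) ℝ := Matrix.of fun i a => lam i ^ e a with hB
    have hAB : A = (N:ℝ)⁻¹ • (B.transpose * B) := by
      ext a b
      show μ (e a + e b) = ((N:ℝ)⁻¹ • (B.transpose * B)) a b
      rw [Matrix.smul_apply, Matrix.mul_apply, hμ]
      simp only [smul_eq_mul]
      congr 1
      refine Finset.sum_congr rfl fun i _ => ?_
      rw [pow_add, Matrix.transpose_apply]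
      rfl
    intro h0
    obtain ⟨x, hx0, hx⟩ := Matrix.exists_mulVec_eq_zero_iff.2 h0
    rw [hAB, Matrix.smul_mulVec] at hx
    have h1 : (B.transpose * B).mulVec x = 0 := by
      rcases smul_eq_zero.1 hx with h | h
      · exact absurd h (inv_ne_zero hN0)
      · exact h
    have h2 : B.mulVec x = 0 := by
      apply dotProduct_self_eq_zero.1
      calc dotProduct (B.mulVec x) (B.mulVec x) = dotProduct (Matrix.vecMul x B.transpose) (B.mulVec x) := by rw [Matrix.vecMul_transpose]
        _ = dotProduct x (B.transpose.mulVec (B.mulVec x)) := (Matrix.dotProduct_mulVec _ _ _).symm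
        _ = dotProduct x ((B.transpose * B).mulVec x) := by rw [Matrix.mulVec_mulVec]
        _ = 0 := by rw [h1, dotProduct_zero]
    -- polynomial vanishing
    set P : Polynomial ℝ := ∑ a, Polynomial.C (x a) * Polynomial.X ^ (e a) with hP
    have hPzero : P = 0 := by
      apply Polynomial.eq_zero_of_natDegree_lt_card_of_eval_eq_zero' P
        (Finset.image lam Finset.univ)
      · intro y hy
        obtain ⟨i, _, rfl⟩ := Finset.mem_image.1 hy
        have hBi : (B.mulVec x) i = 0 := by rw [h2]; rfl
        rw [Matrix.mulVec, dotProduct] at hBi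
        rw [hP, Polynomial.eval_finset_sum]
        rw [← hBi]
        refine Finset.sum_congr rfl fun a _ => ?_
        simp only [Polynomial.eval_mul, Polynomial.eval_C, Polynomial.eval_pow,
          Polynomial.eval_X]
        show x a * lam i ^ e a = B i a * x a
        rw [mul_comm]
        rfl
      · rw [Finset.card_image_of_injective _ hlaminj, Finset.card_univ, Fintype.card_fin]
        have : P.natDegree ≤ Finset.univ.sup e := by
          apply Polynomial.natDegree_sum_le_of_forall_le
          intro a _
          exact (Polynomial.natDegree_C_mul_X_pow_le _ _).trans
            (Finset.le_sup (Finset.mem_univ a))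
        omega
    apply hx0
    funext a
    have hca : P.coeff (e a) = x a := by
      rw [hP, Polynomial.finset_sum_coeff]
      rw [Finset.sum_eq_single a]
      · simp
      · intro b _ hb
        simp only [Polynomial.coeff_C_mul, Polynomial.coeff_X_pow]
        rw [if_neg (fun hh => hb (he hh.symm))]
        ring
      · simp
    rw [hPzero] at hca
    simpa using hca.symm
  intro h
  rw [h, map_zero] at hdet
  exact hAdet hdet.symm

section DetLemmas
open Matrix BigOperators


variable {n : Type*} [Fintype n] [DecidableEq n] {R : Type*} [CommRing R]

lemma det_add_expand (A B : Matrix n n R) :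
    (A + B).det = ∑ S : Finset n, (Matrix.of fun i j => if j ∈ S then A i j else B i j).det := by
  simp only [Matrix.det_apply]
  rw [Finset.sum_comm]
  congr 1
  ext σ
  rw [← Finset.smul_sum]
  congr 1
  have : ∀ i : n, (A + B) (σ i) i = A (σ i) i + B (σ i) i := fun i => rfl
  simp only [this]
  rw [Finset.prod_add]
  rw [Finset.powerset_univ]
  congr 1
  ext S
  simp only [Matrix.of_apply]
  rw [eq_comm, Finset.prod_ite (f := fun i => A (σ i) i) (g := fun i => B (σ i) i)]
  congr 1
  · apply Finset.prod_congr _ (fun _ _ => rfl)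
    ext x; simp
  · apply Finset.prod_congr _ (fun _ _ => rfl)
    ext x; simp [Finset.mem_sdiff]

lemma det_mixed_diag (d : n → R) (B : Matrix n n R) (S : Finset n) :
    (Matrix.of fun i j => if j ∈ S then Matrix.diagonal d i j else B i j).det
      = (∏ j ∈ S, d j) * (B.submatrix (fun i : {x // x ∉ S} => (i : n)) (fun i : {x // x ∉ S} => (i : n))).det := by
  classical
  let e : {x // x ∈ S} ⊕ {x // x ∉ S} ≃ n := Equiv.sumCompl (· ∈ S)
  rw [← Matrix.det_submatrix_equiv_self e]
  have : (Matrix.of fun i j => if j ∈ S then Matrix.diagonal d i j else B i j).submatrix e e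
      = Matrix.fromBlocks (Matrix.diagonal fun i : {x // x ∈ S} => d i)
          (Matrix.of fun (i : {x // x ∈ S}) (j : {x // x ∉ S}) => B i j) 0
          (B.submatrix (fun i : {x // x ∉ S} => (i : n)) (fun i : {x // x ∉ S} => (i : n))) := by
    ext i j
    cases i with
    | inl i => cases j with
      | inl j =>
        simp [e, Matrix.diagonal, Equiv.sumCompl_apply_inl, j.2]
      | inr j => simp [e, j.2]
    | inr i => cases j with
      | inl j =>
        simp [e, Matrix.diagonal, j.2]
        intro h; exact absurd (h ▸ j.2) i.2
      | inr j => simp [e, j.2]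
  rw [this, Matrix.det_fromBlocks_zero₂₁, Matrix.det_diagonal, Finset.prod_coe_sort]

open Polynomial in
lemma charpoly_coeff_eq (M : Matrix n n R) (j : ℕ) (hj : j ≤ Fintype.card n) :
    (-1:R)^j * M.charpoly.coeff (Fintype.card n - j)
      = ∑ T ∈ Finset.univ.filter (fun T : Finset n => T.card = j),
          (M.submatrix (fun i : {x // x ∈ T} => (i : n)) (fun i : {x // x ∈ T} => (i : n))).det := by
  classical
  set m := Fintype.card n with hm
  have hcm : M.charmatrix = Matrix.diagonal (fun _ => (X : R[X])) + (-(M.map C)) := by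
    rw [Matrix.charmatrix, sub_eq_add_neg, Matrix.scalar_apply, RingHom.mapMatrix_apply]
  have hcp : M.charpoly = ∑ S : Finset n,
      C ((-1:R)^(m - S.card) * (M.submatrix (fun i : {x // x ∉ S} => (i : n)) (fun i : {x // x ∉ S} => (i : n))).det)
        * X ^ S.card := by
    rw [Matrix.charpoly, hcm, det_add_expand]
    refine Finset.sum_congr rfl fun S _ => ?_
    rw [det_mixed_diag]
    have h1 : ((-(M.map C)).submatrix (fun i : {x // x ∉ S} => (i : n)) (fun i : {x // x ∉ S} => (i : n)))
        = -((M.submatrix (fun i : {x // x ∉ S} => (i : n)) (fun i : {x // x ∉ S} => (i : n))).map C) := by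
      ext i k; simp
    rw [h1, Matrix.det_neg, ← RingHom.mapMatrix_apply, ← RingHom.map_det]
    have hcard : Fintype.card {x // x ∉ S} = m - S.card := by
      simp only [hm, Fintype.card_subtype]
      have h2 : Finset.filter (fun x => x ∉ S) Finset.univ = Sᶜ := by ext x; simp
      rw [h2, Finset.card_compl]
    rw [hcard, Finset.prod_const]
    ring_nf
    rw [_root_.map_mul, map_pow, map_neg, Polynomial.C_1]
    ring
  rw [hcp, Polynomial.finset_sum_coeff]
  simp only [Polynomial.coeff_C_mul, Polynomial.coeff_X_pow, mul_ite, mul_one, mul_zero]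
  rw [← Finset.sum_filter]
  rw [Finset.mul_sum]
  refine Finset.sum_nbij' (fun S => Sᶜ) (fun T => Tᶜ) ?_ ?_ ?_ ?_ ?_
  · intro S hS
    simp only [Finset.mem_filter, Finset.mem_univ, true_and] at hS ⊢
    rw [Finset.card_compl, ← hS, ← hm, Nat.sub_sub_self hj]
  · intro T hT
    simp only [Finset.mem_filter, Finset.mem_univ, true_and] at hT ⊢
    rw [Finset.card_compl, hT]
  · intro S _; exact compl_compl S
  · intro T _; exact compl_compl T
  · intro S hS
    simp only [Finset.mem_filter, Finset.mem_univ, true_and] at hS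
    have hpow : m - S.card = j := by rw [← hS, Nat.sub_sub_self hj]
    rw [hpow, ← mul_assoc, ← mul_pow, neg_mul_neg, one_mul, one_pow, one_mul]
    let e : {x // x ∈ Sᶜ} ≃ {x // x ∉ S} := Equiv.subtypeEquivRight (fun x => Finset.mem_compl)
    rw [← Matrix.det_submatrix_equiv_self e, Matrix.submatrix_submatrix]
    rfl

end DetLemmas

lemma gram_quot : ∀ (k : ℕ) (f : Fin k → TPoly)
    (_ : ∀ (m : ℕ) (h : m ≤ k), (Gmat fun i : Fin m => f (Fin.castLE h i)).det ≠ 0),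
    ∃ ω, Omega ω ∧ ω ≠ 0 ∧ Omega (ω * (Gmat f).det) := by
  intro k
  induction k with
  | zero =>
    intro f _
    exact ⟨1, omega_one, one_ne_zero, by rw [Matrix.det_isEmpty, mul_one]; exact omega_one⟩
  | succ k ih =>
    intro f hf
    obtain ⟨ω, hω, hω0, hωD⟩ := ih (fun i => f i.castSucc)
      (fun m h => hf m (le_trans h (Nat.le_succ k)))
    have hD' : (Gmat fun i : Fin k => f i.castSucc).det ≠ 0 := hf k (Nat.le_succ k)
    obtain ⟨g, hg⟩ := gram_step k f
    refine ⟨ω * (Gmat fun i : Fin k => f i.castSucc).det ^ 2,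
      InPre.mul hω (omega_sq _),
      mul_ne_zero hω0 (pow_ne_zero _ hD'), ?_⟩
    have heq : ω * (Gmat fun i : Fin k => f i.castSucc).det ^ 2 * (Gmat f).det
        = (ω * (Gmat fun i : Fin k => f i.castSucc).det)
          * ((Gmat fun i : Fin k => f i.castSucc).det * (Gmat f).det) := by ring
    rw [heq]
    exact InPre.mul hωD (InPre.of ⟨g, hg.symm⟩)

lemma quot_sum {α : Type*} [DecidableEq α] (s : Finset α) (g : α → TP)
    (h : ∀ t ∈ s, ∃ ω, Omega ω ∧ ω ≠ 0 ∧ Omega (ω * g t)) :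
    ∃ ω, Omega ω ∧ ω ≠ 0 ∧ Omega (ω * ∑ t ∈ s, g t) := by
  induction s using Finset.induction with
  | empty => exact ⟨1, omega_one, one_ne_zero, by simpa using omega_zero⟩
  | @insert a s ha ih =>
    obtain ⟨ω1, h1, h10, h1m⟩ := h a (Finset.mem_insert_self a s)
    obtain ⟨ω2, h2, h20, h2m⟩ := ih (fun t ht' => h t (Finset.mem_insert_of_mem ht'))
    refine ⟨ω1 * ω2, InPre.mul h1 h2, mul_ne_zero h10 h20, ?_⟩
    rw [Finset.sum_insert ha]
    have heq : ω1 * ω2 * (g a + ∑ t ∈ s, g t)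
        = ω2 * (ω1 * g a) + ω1 * (ω2 * ∑ t ∈ s, g t) := by ring
    rw [heq]
    exact InPre.add (InPre.mul h2 h1m) (InPre.mul h1 h2m)

/-- `σ_j(Han_d)` is a quotient of elements of `Ω`. -/
theorem stmt_5 (d j : ℕ) (h1 : 1 ≤ j) (h2 : j ≤ d) :
    ∃ ω₁ ω₂ : TP, Omega ω₁ ∧ Omega ω₂ ∧ ω₂ ≠ 0 ∧ ω₂ * sigmaCoeff j (HanT d) = ω₁ := by
  classical
  have hm : Fintype.card (Fin (d+1)) = d + 1 := Fintype.card_fin _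
  have hσ : sigmaCoeff j (HanT d)
      = ∑ T ∈ Finset.univ.filter (fun T : Finset (Fin (d+1)) => T.card = j),
          ((HanT d).submatrix (fun i : {x // x ∈ T} => (i : Fin (d+1)))
            (fun i : {x // x ∈ T} => (i : Fin (d+1)))).det := by
    have hcc := charpoly_coeff_eq (HanT d) j (by rw [hm]; omega)
    rw [hm] at hcc
    exact hcc
  have hT : ∀ T ∈ Finset.univ.filter (fun T : Finset (Fin (d+1)) => T.card = j),
      ∃ ω, Omega ω ∧ ω ≠ 0 ∧ Omega (ω *
        ((HanT d).submatrix (fun i : {x // x ∈ T} => (i : Fin (d+1)))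
          (fun i : {x // x ∈ T} => (i : Fin (d+1)))).det) := by
    intro T hTmem
    rw [Finset.mem_filter] at hTmem
    set e0 := T.orderIsoOfFin hTmem.2 with he0
    set ε : Fin j → ℕ := fun p => ((e0 p : Fin (d+1)) : ℕ) with hε
    have hεinj : Function.Injective ε := by
      intro p q hpq
      exact e0.injective (Subtype.ext (Fin.ext hpq))
    have hdet : ((HanT d).submatrix (fun i : {x // x ∈ T} => (i : Fin (d+1)))
          (fun i : {x // x ∈ T} => (i : Fin (d+1)))).det
        = (Gmat fun p : Fin j => (Polynomial.X : TPoly) ^ (ε p)).det := by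
      rw [← Matrix.det_submatrix_equiv_self e0.toEquiv]
      congr 1
      ext a b
      rw [gram_entry]
      rfl
    obtain ⟨ω, hω, hω0, hωm⟩ := gram_quot j (fun p => (Polynomial.X : TPoly) ^ (ε p))
      (fun m h => gram_ne_zero m (fun i => ε (Fin.castLE h i))
        (hεinj.comp (Fin.castLE_injective h)))
    exact ⟨ω, hω, hω0, by rw [hdet]; exact hωm⟩
  obtain ⟨ω, hω, hω0, hωσ⟩ := quot_sum _ _ hT
  exact ⟨ω * sigmaCoeff j (HanT d), ω, by rw [hσ]; exact hωσ, hω, hω0, rfl⟩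

end
end

section
/- Let d ∈ ℕ and let S ⊂ 𝒯_{2d} be a finite set that is given by a linear matrix inequality in the symbols Tⱼ; that is, there exist m ∈ ℕ and real symmetric m×m matrices A₀, A₁, …, A_{2d} such that {γ ∈ ℝ^{2d} : s[γ] ≥ 0 for all s ∈ S} = {γ ∈ ℝ^{2d} : A₀ + γ₁A₁ + ⋯ + γ_{2d}A_{2d} is positive semidefinite}. If there exists n ∈ ℕ such that 𝒦_S ∩ Sym_n(ℝ) has nonempty interior in Sym_n(ℝ), then L_S is regular closed in ℝ^{2d}. -/
noncomputable section

/-- Membership in `𝒯_{2d} = ℝ[T₁,…,T_{2d}]`. -/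
def InTP2d (d : ℕ) (p : TP) : Prop := p.vars ⊆ Finset.Icc 1 (2*d)

section AuxStmt8

open Matrix Polynomial Finset

namespace Stmt8Aux

variable {d : ℕ}

/-- moment vector of a matrix -/
def mo (d : ℕ) {n : ℕ} (X : Matrix (Fin n) (Fin n) ℝ) : Fin (2*d) → ℝ :=
  fun i => nTr X (i.val + 1)

lemma nTr_zero {n : ℕ} (hn : 0 < n) (X : Matrix (Fin n) (Fin n) ℝ) : nTr X 0 = 1 := by
  have : ((1 : Matrix (Fin n) (Fin n) ℝ)).trace = (n : ℝ) := by
    simp [Matrix.trace_one]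
  simp only [nTr, pow_zero, this]
  field_simp

lemma extPt_mo {n : ℕ} (hn : 0 < n) (X : Matrix (Fin n) (Fin n) ℝ) {j : ℕ} (hj : j ≤ 2*d) :
    extPt d (mo d X) j = nTr X j := by
  unfold extPt
  by_cases h : 0 < j ∧ j ≤ 2*d
  · rw [dif_pos h]
    show nTr X ((j-1)+1) = nTr X j
    congr 1
    omega
  · rw [dif_neg h]
    have hj0 : j = 0 := by omega
    rw [hj0, nTr_zero hn X]

lemma trace_sq_nonneg {n : ℕ} (A : Matrix (Fin n) (Fin n) ℝ) (hA : A.IsSymm) :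
    0 ≤ (A * A).trace := by
  have h : (A * A).trace = ∑ i, ∑ j, A i j * A i j := by
    simp only [Matrix.trace, Matrix.diag, Matrix.mul_apply]
    exact Finset.sum_congr rfl fun i _ => Finset.sum_congr rfl fun j _ => by rw [hA.apply i j]
  rw [h]
  exact Finset.sum_nonneg fun i _ => Finset.sum_nonneg fun j _ => mul_self_nonneg _

lemma mo_mem_LSet {n : ℕ} (hn : 0 < n) (S : Finset TP) (hS : ∀ s ∈ S, InTP2d d s)
    (X : Matrix (Fin n) (Fin n) ℝ) (hX : X.IsSymm) (hXS : ∀ s ∈ S, 0 ≤ evalT X s) :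
    mo d X ∈ LSet d S := by
  constructor
  · intro s hs
    have hvars : ∀ i ∈ s.vars, extPt d (mo d X) i = nTr X i := by
      intro i hi
      have := hS s hs hi
      rw [Finset.mem_Icc] at this
      exact extPt_mo hn X this.2
    have : evalPt d (mo d X) s = evalT X s := by
      unfold evalPt evalT
      exact MvPolynomial.eval₂Hom_congr' rfl (fun i h1 _ => hvars i h1) rfl
    rw [this]
    exact hXS s hs
  · have hent : ∀ i j : Fin (d+1), hankelPt d (mo d X) i j = nTr X (i.val + j.val) := by
      intro i j
      have hi := i.isLt
      have hj := j.isLt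
      exact extPt_mo hn X (by omega)
    refine Matrix.PosSemidef.of_dotProduct_mulVec_nonneg ?_ ?_
    · ext i j
      simp only [Matrix.conjTranspose_apply, star_trivial, hent, Nat.add_comm]
    · intro v
      set P : Matrix (Fin n) (Fin n) ℝ := ∑ i : Fin (d+1), v i • X ^ (i.val) with hP
      have hPs : P.IsSymm := by
        unfold Matrix.IsSymm
        rw [hP, Matrix.transpose_sum]
        exact Finset.sum_congr rfl fun i _ => by
          rw [Matrix.transpose_smul, (hX.pow i.val).eq]
      have hPP : (P * P).trace = ∑ i : Fin (d+1), ∑ j : Fin (d+1),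
          v i * v j * (X ^ (i.val + j.val)).trace := by
        rw [hP, Finset.sum_mul_sum]
        rw [Matrix.trace_sum]
        refine Finset.sum_congr rfl fun i _ => ?_
        rw [Matrix.trace_sum]
        refine Finset.sum_congr rfl fun j _ => ?_
        rw [smul_mul_smul_comm, ← pow_add, Matrix.trace_smul, smul_eq_mul]
      have hquad : star v ⬝ᵥ (hankelPt d (mo d X)) *ᵥ v = (n : ℝ)⁻¹ * (P * P).trace := by
        rw [hPP, Finset.mul_sum]
        show ∑ i, star v i * ∑ j, hankelPt d (mo d X) i j * v j = _
        refine Finset.sum_congr rfl fun i _ => ?_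
        rw [Finset.mul_sum, Finset.mul_sum]
        refine Finset.sum_congr rfl fun j _ => ?_
        rw [hent i j]
        simp only [star_trivial, nTr]
        ring
      rw [hquad]
      exact mul_nonneg (by positivity) (trace_sq_nonneg P hPs)

end Stmt8Aux

end AuxStmt8
section AuxStmt8b
open Matrix Polynomial Finset
namespace Stmt8Aux

lemma addpow {n : ℕ} (X : Matrix (Fin n) (Fin n) ℝ) (t : ℝ) (k : ℕ) :
    (X + t • 1)^k = ∑ l ∈ Finset.range (k+1), ((k.choose l : ℝ) * t^(k-l)) • X^l := by
  have hc : Commute X (t • (1 : Matrix (Fin n) (Fin n) ℝ)) := by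
    simpa using (Commute.one_right X).smul_right t
  rw [hc.add_pow]
  refine Finset.sum_congr rfl fun l hl => ?_
  rw [_root_.smul_pow, one_pow, mul_smul_comm, mul_one]
  rw [show ((k.choose l : Matrix (Fin n) (Fin n) ℝ)) = (k.choose l : ℝ) • 1 by
    rw [Nat.cast_smul_eq_nsmul]; simp]
  rw [mul_smul_comm, mul_one, smul_smul, mul_comm]

/-- The auxiliary polynomial whose evaluation at `t` gives `nTr (X + t•1) k`. -/
def qp {n : ℕ} (X : Matrix (Fin n) (Fin n) ℝ) (k : ℕ) : Polynomial ℝ :=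
  ∑ m ∈ Finset.range (k+1), Polynomial.C ((k.choose m : ℝ) * nTr X m) * Polynomial.X ^ (k - m)

lemma qp_eval {n : ℕ} (X : Matrix (Fin n) (Fin n) ℝ) (k : ℕ) (t : ℝ) :
    (qp X k).eval t = nTr (X + t • 1) k := by
  unfold qp nTr
  rw [addpow X t k, Matrix.trace_sum, Finset.mul_sum]
  rw [Polynomial.eval_finset_sum]
  refine Finset.sum_congr rfl fun m hm => ?_
  rw [Matrix.trace_smul]
  simp only [Polynomial.eval_mul, Polynomial.eval_C, Polynomial.eval_pow, Polynomial.eval_X,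
    smul_eq_mul]
  ring

lemma qp_coeff_of_lt {n : ℕ} (X : Matrix (Fin n) (Fin n) ℝ) {k l : ℕ} (hl : k < l) :
    (qp X k).coeff l = 0 := by
  unfold qp
  rw [Polynomial.finset_sum_coeff]
  refine Finset.sum_eq_zero fun m hm => ?_
  rw [Finset.mem_range] at hm
  rw [Polynomial.coeff_C_mul, Polynomial.coeff_X_pow, if_neg (by omega), mul_zero]

lemma qp_coeff_top {n : ℕ} (X : Matrix (Fin n) (Fin n) ℝ) (k : ℕ) :
    (qp X k).coeff k = nTr X 0 := by
  unfold qp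
  rw [Polynomial.finset_sum_coeff]
  rw [Finset.sum_eq_single_of_mem 0 (Finset.mem_range.mpr (by omega))]
  · rw [Polynomial.coeff_C_mul, Polynomial.coeff_X_pow, if_pos (by omega)]
    simp
  · intro m hm hm0
    rw [Finset.mem_range] at hm
    rw [Polynomial.coeff_C_mul, Polynomial.coeff_X_pow, if_neg (by omega), mul_zero]

lemma psd_smul {n : ℕ} {M : Matrix (Fin n) (Fin n) ℝ} (hM : M.PosSemidef) {a : ℝ} (ha : 0 ≤ a) :
    (a • M).PosSemidef := by
  refine Matrix.PosSemidef.of_dotProduct_mulVec_nonneg ?_ (fun x => ?_)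
  · show (a • M).conjTranspose = a • M
    rw [Matrix.conjTranspose_smul, hM.1.eq]
    norm_num
  · rw [Matrix.smul_mulVec, dotProduct_smul, smul_eq_mul]
    exact mul_nonneg ha (hM.dotProduct_mulVec_nonneg x)

lemma hankel_affine (d : ℕ) (γ δ : Fin (2*d) → ℝ) {a b : ℝ} (hab : a + b = 1) :
    hankelPt d (a • γ + b • δ) = a • hankelPt d γ + b • hankelPt d δ := by
  ext i j
  simp only [hankelPt, extPt, Matrix.add_apply, Matrix.smul_apply, smul_eq_mul]
  by_cases h : 0 < i.val + j.val ∧ i.val + j.val ≤ 2*d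
  · rw [dif_pos h, dif_pos h, dif_pos h]
    simp [mul_comm]
  · rw [dif_neg h, dif_neg h, dif_neg h]
    simp [hab]

lemma lset_convex (d : ℕ) (S : Finset TP)
    {m : ℕ} (A₀ : Matrix (Fin m) (Fin m) ℝ) (A : Fin (2*d) → Matrix (Fin m) (Fin m) ℝ)
    (hlmi : {γ : Fin (2*d) → ℝ | ∀ s ∈ S, 0 ≤ evalPt d γ s} =
            {γ : Fin (2*d) → ℝ | (A₀ + ∑ i, γ i • A i).PosSemidef}) :
    Convex ℝ (LSet d S) := by
  intro γ hγ δ hδ a b ha hb hab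
  constructor
  · have h1 : (A₀ + ∑ i, γ i • A i).PosSemidef := (Set.ext_iff.mp hlmi γ).mp hγ.1
    have h2 : (A₀ + ∑ i, δ i • A i).PosSemidef := (Set.ext_iff.mp hlmi δ).mp hδ.1
    refine (Set.ext_iff.mp hlmi (a • γ + b • δ)).mpr ?_
    show (A₀ + ∑ i, (a • γ + b • δ) i • A i).PosSemidef
    have key : A₀ + ∑ i, (a • γ + b • δ) i • A i =
        a • (A₀ + ∑ i, γ i • A i) + b • (A₀ + ∑ i, δ i • A i) := by
      rw [smul_add, smul_add, Finset.smul_sum, Finset.smul_sum, add_add_add_comm,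
        ← add_smul, hab, one_smul, ← Finset.sum_add_distrib]
      congr 1
      refine Finset.sum_congr rfl fun i _ => ?_
      simp only [Pi.add_apply, Pi.smul_apply, smul_eq_mul, add_smul, smul_smul]
    rw [key]
    exact (psd_smul h1 ha).add (psd_smul h2 hb)
  · rw [hankel_affine d γ δ hab]
    exact (psd_smul hγ.2 ha).add (psd_smul hδ.2 hb)

lemma extPt_continuous (d : ℕ) (j : ℕ) :
    Continuous fun γ : Fin (2*d) → ℝ => extPt d γ j := by
  unfold extPt
  by_cases h : 0 < j ∧ j ≤ 2*d
  · simp only [dif_pos h]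
    exact continuous_apply _
  · simp only [dif_neg h]
    exact continuous_const

lemma hankel_hermitian (d : ℕ) (γ : Fin (2*d) → ℝ) : (hankelPt d γ).IsHermitian := by
  ext i j
  simp only [hankelPt, Matrix.conjTranspose_apply, star_trivial, Nat.add_comm]

lemma lset_closed (d : ℕ) (S : Finset TP) : IsClosed (LSet d S) := by
  have h1 : IsClosed {γ : Fin (2*d) → ℝ | ∀ s ∈ S, 0 ≤ evalPt d γ s} := by
    have : {γ : Fin (2*d) → ℝ | ∀ s ∈ S, 0 ≤ evalPt d γ s} =
        ⋂ s ∈ S, {γ | 0 ≤ evalPt d γ s} := by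
      ext γ; simp
    rw [this]
    refine isClosed_biInter fun s _ => isClosed_le continuous_const ?_
    exact (MvPolynomial.continuous_eval (p := s)).comp
      (continuous_pi fun j => extPt_continuous d j)
  have h2 : IsClosed {γ : Fin (2*d) → ℝ | (hankelPt d γ).PosSemidef} := by
    have heq : {γ : Fin (2*d) → ℝ | (hankelPt d γ).PosSemidef} =
        ⋂ v : Fin (d+1) → ℝ, {γ | 0 ≤ star v ⬝ᵥ (hankelPt d γ) *ᵥ v} := by
      ext γ
      simp only [Set.mem_setOf_eq, Set.mem_iInter]
      exact ⟨fun h v => h.dotProduct_mulVec_nonneg v, fun h => .of_dotProduct_mulVec_nonneg (hankel_hermitian d γ) h⟩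
    rw [heq]
    refine isClosed_iInter fun v => isClosed_le continuous_const ?_
    show Continuous fun γ => ∑ i, star v i * ∑ j, hankelPt d γ i j * v j
    refine continuous_finset_sum _ fun i _ => Continuous.mul continuous_const ?_
    refine continuous_finset_sum _ fun j _ => Continuous.mul ?_ continuous_const
    exact extPt_continuous d _
  have : LSet d S = {γ : Fin (2*d) → ℝ | ∀ s ∈ S, 0 ≤ evalPt d γ s} ∩
      {γ : Fin (2*d) → ℝ | (hankelPt d γ).PosSemidef} := rfl
  rw [this]
  exact h1.inter h2

lemma regular_closed_of_convex {E : Type*} [NormedAddCommGroup E] [NormedSpace ℝ E]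
    {s : Set E} (hconv : Convex ℝ s) (hcl : IsClosed s) (hne : (interior s).Nonempty) :
    s = closure (interior s) := by
  obtain ⟨y, hy⟩ := hne
  apply Set.Subset.antisymm
  · intro x hx
    have h0 : Filter.Tendsto (fun k : ℕ => (1/(k+1) : ℝ)) Filter.atTop (nhds 0) :=
      tendsto_one_div_add_atTop_nhds_zero_nat
    have hseq : Filter.Tendsto (fun k : ℕ => ((1/(k+1) : ℝ)) • y + (1 - 1/(k+1) : ℝ) • x)
        Filter.atTop (nhds x) := by
      have h1 : Filter.Tendsto (fun k : ℕ => (1 - 1/(k+1) : ℝ)) Filter.atTop (nhds (1 - 0)) :=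
        (tendsto_const_nhds (x := (1:ℝ))).sub h0
      have := (h0.smul_const y).add (h1.smul_const x)
      simpa using this
    refine mem_closure_of_tendsto hseq (Filter.Eventually.of_forall fun k => ?_)
    have hk : (0:ℝ) < 1/(k+1) := by positivity
    have hk1 : (1/(k+1) : ℝ) ≤ 1 := by
      rw [div_le_one (by positivity)]
      simp
    exact hconv.combo_interior_closure_mem_interior hy (subset_closure hx) hk
      (by linarith) (by ring)
  · have : closure (interior s) ⊆ closure s := closure_mono interior_subset
    rwa [hcl.closure_eq] at this

end Stmt8Aux
end AuxStmt8b

open Matrix Polynomial Finset Stmt8Aux in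
/-- If `S` is given by a linear matrix inequality in the symbols `T_j` and `𝒦_S ∩ Sym_n` has
nonempty interior for some `n`, then `L_S` is regular closed. -/
theorem stmt_8 (d : ℕ) (S : Finset TP) (hS : ∀ s ∈ S, InTP2d d s)
    (m : ℕ) (A₀ : Matrix (Fin m) (Fin m) ℝ) (A : Fin (2*d) → Matrix (Fin m) (Fin m) ℝ)
    (hA₀ : A₀.IsSymm) (hA : ∀ i, (A i).IsSymm)
    (hlmi : {γ : Fin (2*d) → ℝ | ∀ s ∈ S, 0 ≤ evalPt d γ s} =
            {γ : Fin (2*d) → ℝ | (A₀ + ∑ i, γ i • A i).PosSemidef})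
    (h : ∃ n : ℕ, 0 < n ∧
      (interior {X : {M : Matrix (Fin n) (Fin n) ℝ // M.IsSymm} |
        ∀ s ∈ S, 0 ≤ evalT X.val s}).Nonempty) :
    LSet d S = closure (interior (LSet d S)) := by
  have hconv := lset_convex d S A₀ A hlmi
  have hclosed := lset_closed d S
  refine regular_closed_of_convex hconv hclosed ?_
  obtain ⟨n, hn, X₀, hX₀⟩ := h
  set M : Matrix (Fin n) (Fin n) ℝ := X₀.1 with hMdef
  have hsymm : ∀ t : ℝ, (M + t • (1 : Matrix (Fin n) (Fin n) ℝ)).IsSymm := by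
    intro t
    show (M + t • (1 : Matrix (Fin n) (Fin n) ℝ))ᵀ = _
    rw [Matrix.transpose_add, Matrix.transpose_smul, Matrix.transpose_one, X₀.2.eq]
  set cv : ℝ → {N : Matrix (Fin n) (Fin n) ℝ // N.IsSymm} := fun t => ⟨M + t • 1, hsymm t⟩
    with hcv_def
  have hcv : Continuous cv :=
    Continuous.subtype_mk (continuous_const.add (continuous_id.smul continuous_const)) _
  have h0mem : (0:ℝ) ∈ cv ⁻¹'
      (interior {X : {N : Matrix (Fin n) (Fin n) ℝ // N.IsSymm} |
        ∀ s ∈ S, 0 ≤ evalT X.val s}) := by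
    have : cv 0 = X₀ := Subtype.ext (by simp [hcv_def, hMdef])
    simp only [Set.mem_preimage, this]
    exact hX₀
  obtain ⟨ε, hε, hball⟩ := Metric.isOpen_iff.mp (hcv.isOpen_preimage _ isOpen_interior) 0 h0mem
  have hmem : ∀ t ∈ Metric.ball (0:ℝ) ε, mo d (M + t • 1) ∈ LSet d S := by
    intro t ht
    have h1 : cv t ∈ {X : {N : Matrix (Fin n) (Fin n) ℝ // N.IsSymm} |
        ∀ s ∈ S, 0 ≤ evalT X.val s} := interior_subset (hball ht)
    exact mo_mem_LSet hn S hS _ (hsymm t) h1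
  have h0ball : (0:ℝ) ∈ Metric.ball (0:ℝ) ε := Metric.mem_ball_self hε
  have hLne : (LSet d S).Nonempty := ⟨_, hmem 0 h0ball⟩
  rw [hconv.interior_nonempty_iff_affineSpan_eq_top]
  rw [AffineSubspace.affineSpan_eq_top_iff_vectorSpan_eq_top_of_nonempty ℝ _ _ hLne]
  by_contra hne'
  obtain ⟨φ, hφ0, hmap⟩ :=
    Submodule.exists_dual_map_eq_bot_of_lt_top (lt_top_iff_ne_top.mpr hne') inferInstance
  have hvanish : ∀ w ∈ vectorSpan ℝ (LSet d S), φ w = 0 := by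
    intro w hw
    have h2 : φ w ∈ (vectorSpan ℝ (LSet d S)).map φ := Submodule.mem_map_of_mem hw
    rw [hmap] at h2
    simpa using h2
  set c : Fin (2*d) → ℝ := fun i => φ (Pi.single i 1) with hcdef
  have hφx : ∀ x : Fin (2*d) → ℝ, φ x = ∑ i, x i * c i := by
    intro x
    rw [LinearMap.pi_apply_eq_sum_univ φ x]
    refine Finset.sum_congr rfl fun i _ => ?_
    rw [smul_eq_mul, hcdef]
    congr 2
    ext j
    simp [Pi.single_apply, eq_comm]
  have hc : ∃ i, c i ≠ 0 := by
    by_contra hcc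
    push_neg at hcc
    exact hφ0 (LinearMap.ext fun x => by rw [hφx x]; simp [hcc])
  set F : Finset (Fin (2*d)) := Finset.univ.filter (fun i => c i ≠ 0) with hFdef
  have hF : F.Nonempty := by
    obtain ⟨i, hi⟩ := hc
    exact ⟨i, by simp [hFdef, hi]⟩
  set i₀ := F.max' hF with hi₀
  have hi₀F : i₀ ∈ F := F.max'_mem hF
  have hc₀ : c i₀ ≠ 0 := (Finset.mem_filter.mp hi₀F).2
  have hmax : ∀ i : Fin (2*d), i₀ < i → c i = 0 := by
    intro i hi
    by_contra hci
    exact absurd (F.le_max' i (by simp [hFdef, hci])) (not_le.mpr hi)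
  set γ0 : ℝ := φ (mo d (M + (0:ℝ) • 1)) with hγ0
  set p : Polynomial ℝ :=
    (∑ i : Fin (2*d), Polynomial.C (c i) * qp M (i.val+1)) - Polynomial.C γ0 with hp
  have hpeval : ∀ t ∈ Metric.ball (0:ℝ) ε, p.eval t = 0 := by
    intro t ht
    have hd : mo d (M + t•1) - mo d (M + (0:ℝ)•1) ∈ vectorSpan ℝ (LSet d S) := by
      have h3 := vsub_mem_vectorSpan ℝ (hmem t ht) (hmem 0 h0ball)
      simpa using h3
    have hdiff : φ (mo d (M + t•1)) - γ0 = 0 := by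
      have h4 := hvanish _ hd
      rw [map_sub] at h4
      rw [hγ0]
      exact h4
    rw [hp]
    simp only [Polynomial.eval_sub, Polynomial.eval_finset_sum, Polynomial.eval_mul,
      Polynomial.eval_C]
    have h5 : ∑ i : Fin (2*d), c i * (qp M (i.val+1)).eval t = φ (mo d (M + t•1)) := by
      rw [hφx]
      refine Finset.sum_congr rfl fun i _ => ?_
      rw [qp_eval M (i.val+1) t]
      show c i * nTr (M + t•1) (i.val+1) = mo d (M+t•1) i * c i
      rw [mul_comm]
      rfl
    rw [h5]
    exact hdiff
  have hp0 : p = 0 := by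
    apply Polynomial.eq_zero_of_infinite_isRoot
    refine (Set.Ioo_infinite (show -ε < ε by linarith)).mono ?_
    intro t ht
    simp only [Set.mem_setOf_eq, Polynomial.IsRoot]
    apply hpeval
    rw [Metric.mem_ball, Real.dist_eq, sub_zero, abs_lt]
    exact ⟨ht.1, ht.2⟩
  have hcoeff : p.coeff (i₀.val + 1) = c i₀ := by
    rw [hp, Polynomial.coeff_sub, Polynomial.coeff_C, if_neg (by omega), sub_zero,
      Polynomial.finset_sum_coeff]
    simp only [Polynomial.coeff_C_mul]
    rw [Finset.sum_eq_single_of_mem i₀ (Finset.mem_univ _)]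
    · rw [qp_coeff_top M (i₀.val+1), nTr_zero hn M, mul_one]
    · intro i _ hii
      have hne : i.val ≠ i₀.val := fun hh => hii (Fin.ext hh)
      rcases Nat.lt_or_ge i.val i₀.val with hlt | hge
      · rw [qp_coeff_of_lt M (by omega), mul_zero]
      · rw [hmax i (by exact Fin.lt_def.mpr (by omega)), zero_mul]
  rw [hp0] at hcoeff
  simp only [Polynomial.coeff_zero] at hcoeff
  exact hc₀ hcoeff.symm

end
end

section
/- For every n ∈ ℕ and every real symmetric n×n matrix X, writing τⱼ = (1/n)·tr(X^j), the inequality τ₄(τ₂ − τ₁²) + 2τ₃τ₂τ₁ − τ₃² − τ₂³ ≥ 0 holds. -/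
noncomputable section

/-- The inequality `τ₄(τ₂ − τ₁²) + 2τ₃τ₂τ₁ − τ₃² − τ₂³ ≥ 0` for normalized traces of powers
of a symmetric matrix. -/
theorem stmt_9 (n : ℕ) (hn : 0 < n) (X : Matrix (Fin n) (Fin n) ℝ) (hX : X.IsSymm) :
    0 ≤ nTr X 4 * (nTr X 2 - nTr X 1 ^ 2) + 2 * nTr X 3 * nTr X 2 * nTr X 1
        - nTr X 3 ^ 2 - nTr X 2 ^ 3 := by
  classical
  have hH : X.IsHermitian := by
    rwa [Matrix.IsHermitian, Matrix.conjTranspose_eq_transpose_of_trivial]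
  set ev : Fin n → ℝ := hH.eigenvalues with hev
  have htr : ∀ j : ℕ, (X ^ j).trace = ∑ i, ev i ^ j := by
    intro j
    set U : Matrix (Fin n) (Fin n) ℝ := (hH.eigenvectorUnitary : Matrix (Fin n) (Fin n) ℝ) with hUdef
    set D : Matrix (Fin n) (Fin n) ℝ := Matrix.diagonal (RCLike.ofReal ∘ hH.eigenvalues) with hDdef
    have hU : star U * U = 1 := Matrix.mem_unitaryGroup_iff'.mp hH.eigenvectorUnitary.2
    have hU' : U * star U = 1 := Matrix.mem_unitaryGroup_iff.mp hH.eigenvectorUnitary.2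
    have hspec : X = U * D * star U := hH.spectral_theorem
    have hpow : X ^ j = U * D ^ j * star U := by
      induction j with
      | zero => simp [hU']
      | succ k ih =>
        rw [pow_succ, ih, hspec, pow_succ,
          show U * D ^ k * star U * (U * D * star U) = U * D ^ k * (star U * U) * (D * star U) by
            noncomm_ring, hU]
        noncomm_ring
    rw [hpow, Matrix.trace_mul_cycle, hU, Matrix.one_mul, hDdef,
      Matrix.diagonal_pow, Matrix.trace_diagonal]
    simp [hev]
  set S : ℕ → ℝ := fun m => ∑ i, ev i ^ m with hS
  have hnTr : ∀ m : ℕ, nTr X m = (n : ℝ)⁻¹ * S m := by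
    intro m; rw [nTr, htr m]
  set M : Matrix (Fin 3) (Fin 3) ℝ := fun j k => (n : ℝ)⁻¹ * S (j.val + k.val) with hM
  have hMpsd : M.PosSemidef := by
    rw [Matrix.posSemidef_iff_dotProduct_mulVec]
    constructor
    · ext j k
      rw [Matrix.conjTranspose_apply]
      simp only [hM, Matrix.conjTranspose_apply, star_trivial]
      rw [Nat.add_comm]
    · intro x
      have key : ∑ i, (x 0 + x 1 * ev i + x 2 * ev i ^ 2) ^ 2
          = x 0 ^ 2 * S 0 + 2 * x 0 * x 1 * S 1 + (x 1 ^ 2 + 2 * x 0 * x 2) * S 2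
            + 2 * x 1 * x 2 * S 3 + x 2 ^ 2 * S 4 := by
        simp only [hS, Finset.mul_sum, ← Finset.sum_add_distrib]
        exact Finset.sum_congr rfl fun i _ => by ring
      have hform : dotProduct (star x) (M.mulVec x)
          = (n : ℝ)⁻¹ * ∑ i, (x 0 + x 1 * ev i + x 2 * ev i ^ 2) ^ 2 := by
        rw [key]
        simp only [dotProduct, Matrix.mulVec, dotProduct, star_trivial,
          Fin.sum_univ_three, hM, Fin.val_zero, Fin.val_one, Fin.val_two]
        norm_num
        ring
      rw [hform]
      have h1 : (0:ℝ) ≤ (n : ℝ)⁻¹ := by positivity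
      have h2 : (0:ℝ) ≤ ∑ i, (x 0 + x 1 * ev i + x 2 * ev i ^ 2) ^ 2 :=
        Finset.sum_nonneg fun i _ => sq_nonneg _
      positivity
  have hdet : 0 ≤ M.det := by
    rw [hMpsd.1.det_eq_prod_eigenvalues]
    refine Finset.prod_nonneg fun i _ => ?_
    exact_mod_cast hMpsd.eigenvalues_nonneg i
  have hS0 : (n : ℝ)⁻¹ * S 0 = 1 := by
    simp only [hS, pow_zero, Finset.sum_const, Finset.card_univ, Fintype.card_fin, nsmul_eq_mul,
      mul_one]
    field_simp
  rw [Matrix.det_fin_three] at hdet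
  simp only [hM] at hdet
  norm_num at hdet
  rw [hS0] at hdet
  simp only [hnTr]
  nlinarith [hdet]

end
end

section
/- There do not exist n ∈ ℕ with n ≥ 1 and a real symmetric n×n matrix X such that tr((X − X²)²) = 0 and √2·tr(X) = n; equivalently, no symmetric matrix of any finite size satisfies both (1/n)tr((X − X²)²) = 0 and √2·(1/n)tr(X) − 1 = 0. -/
noncomputable section

lemma sym_sq_trace_zero {n : ℕ} (A : Matrix (Fin n) (Fin n) ℝ) (hA : A.IsSymm)
    (h : (A ^ 2).trace = 0) : A = 0 := by
  have key : (A ^ 2).trace = ∑ i, ∑ j, A i j ^ 2 := by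
    rw [pow_two, Matrix.trace]
    simp only [Matrix.diag_apply, Matrix.mul_apply]
    refine Finset.sum_congr rfl fun i _ => Finset.sum_congr rfl fun j _ => ?_
    rw [pow_two]
    congr 1
    exact (congrFun (congrFun hA j) i).symm ▸ rfl
  rw [key] at h
  ext i j
  have h1 : ∀ i ∈ (Finset.univ : Finset (Fin n)), 0 ≤ ∑ j, A i j ^ 2 :=
    fun i _ => Finset.sum_nonneg fun j _ => sq_nonneg _
  have h2 := (Finset.sum_eq_zero_iff_of_nonneg h1).mp h i (Finset.mem_univ i)
  have h3 := (Finset.sum_eq_zero_iff_of_nonneg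
    (fun j _ => sq_nonneg (A i j))).mp h2 j (Finset.mem_univ j)
  simpa using pow_eq_zero_iff (n := 2) (by norm_num) |>.mp h3

lemma idem_trace_nat {n : ℕ} (X : Matrix (Fin n) (Fin n) ℝ) (hX : X.IsSymm)
    (hidem : X = X ^ 2) : ∃ k : ℕ, X.trace = k := by
  have hherm : X.IsHermitian := hX
  -- trace = sum of eigenvalues
  have htr : X.trace = ∑ i, hherm.eigenvalues i := by
    conv_lhs => rw [hherm.spectral_theorem]
    rw [Unitary.conjStarAlgAut_apply, Matrix.trace_mul_cycle,
      (Matrix.mem_unitaryGroup_iff'.mp (hherm.eigenvectorUnitary).2), Matrix.one_mul]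
    simp [Matrix.trace_diagonal]
  -- each eigenvalue is 0 or 1
  have heig : ∀ i, hherm.eigenvalues i = 0 ∨ hherm.eigenvalues i = 1 := by
    intro i
    set μ := hherm.eigenvalues i
    set v := ⇑(hherm.eigenvectorBasis i)
    have hv : Matrix.mulVec X v = μ • v := hherm.mulVec_eigenvectorBasis i
    have hv2 : Matrix.mulVec X v = (μ * μ) • v := by
      conv_lhs => rw [hidem]
      rw [pow_two, ← Matrix.mulVec_mulVec, hv, Matrix.mulVec_smul, hv, smul_smul]
    have hvne : v ≠ 0 := by
      intro h0
      have := (hherm.eigenvectorBasis).orthonormal.1 i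
      rw [show (hherm.eigenvectorBasis i) = 0 from PiLp.ext (congrFun h0)] at this
      simp at this
    have : (μ - μ * μ) • v = 0 := by
      rw [sub_smul, ← hv, ← hv2, sub_self]
    have hμ : μ - μ * μ = 0 := by
      by_contra hne
      exact hvne (by simpa [hne] using smul_eq_zero.mp this)
    rcases mul_eq_zero.mp (show μ * (1 - μ) = 0 by ring_nf; linarith [hμ]) with h | h
    · exact Or.inl h
    · exact Or.inr (by linarith)
  classical
  refine ⟨(Finset.univ.filter (fun i => hherm.eigenvalues i = 1)).card, ?_⟩
  rw [htr, ← Finset.sum_filter_add_sum_filter_not Finset.univ (fun i => hherm.eigenvalues i = 1)]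
  rw [Finset.sum_congr rfl (fun i hi => (Finset.mem_filter.mp hi).2),
    Finset.sum_eq_zero (fun i hi => (heig i).resolve_right (Finset.mem_filter.mp hi).2)]
  simp

/-- No symmetric matrix of any finite size satisfies `tr((X − X²)²) = 0` and `√2·tr(X) = n`. -/
theorem stmt_15 :
    ¬ ∃ (n : ℕ), 1 ≤ n ∧ ∃ X : Matrix (Fin n) (Fin n) ℝ, X.IsSymm ∧
      ((X - X ^ 2) ^ 2).trace = 0 ∧ Real.sqrt 2 * X.trace = n := by
  rintro ⟨n, hn, X, hsymm, h1, h2⟩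
  have hAsymm : (X - X ^ 2).IsSymm := by
    simpa [Matrix.IsSymm, Matrix.transpose_sub, Matrix.transpose_pow] using
      congrArg₂ (· - ·) hsymm (congrArg (· ^ 2) hsymm)
  have hA0 : X - X ^ 2 = 0 := sym_sq_trace_zero _ hAsymm h1
  obtain ⟨k, hk⟩ := idem_trace_nat X hsymm (sub_eq_zero.mp hA0)
  rw [hk] at h2
  rcases Nat.eq_zero_or_pos k with hk0 | hkpos
  · subst hk0
    have hn0 : (n : ℝ) = 0 := by simpa using h2.symm
    exact absurd (Nat.cast_eq_zero.mp hn0) (by omega)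
  · have : Real.sqrt 2 = (n : ℝ) / (k : ℝ) := by
      field_simp at h2 ⊢; linarith [h2]
    exact irrational_sqrt_two ⟨(n : ℚ) / (k : ℚ), by push_cast [this]; ring⟩


end
end

section
/- For an n×n real symmetric matrix X define F(X) = (1/n)·tr((X − X²)²) + (√2·(1/n)·tr(X) − 1)². Then for every n ∈ ℕ with n ≥ 1 there exists ε > 0 such that F(X) ≥ ε for all real symmetric n×n matrices X, and yet there exist N ∈ ℕ with N > n and a real symmetric N×N matrix Y with F(Y) < ε. Consequently, no single matrix size suffices to verify positivity of the trace polynomial Tr((x−x²)²) + (√2·Tr(x) − 1)² − ε on matrices of all sizes. -/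
noncomputable section

/-- The evaluation of `f = Tr((x−x²)²) + (√2·Tr(x) − 1)²` at an `n × n` matrix. -/
def Fval (n : ℕ) (X : Matrix (Fin n) (Fin n) ℝ) : ℝ :=
  (n : ℝ)⁻¹ * (((X - X ^ 2) ^ 2).trace) + (Real.sqrt 2 * ((n : ℝ)⁻¹ * X.trace) - 1) ^ 2

-- pell
def pellP : ℕ → ℕ × ℕ
  | 0 => (1, 1)
  | m + 1 => ((pellP m).1 + 2 * (pellP m).2, (pellP m).1 + (pellP m).2)

lemma pellP_sq (m : ℕ) : ((pellP m).1 : ℤ)^2 - 2 * ((pellP m).2 : ℤ)^2 = (-1)^(m+1) := by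
  induction m with
  | zero => norm_num [pellP]
  | succ m ih =>
    show (((pellP m).1 + 2 * (pellP m).2 : ℕ) : ℤ)^2 - 2 * (((pellP m).1 + (pellP m).2 : ℕ) : ℤ)^2 = _
    push_cast
    rw [pow_succ ((-1:ℤ)) (m+1)]
    linear_combination (-1 : ℤ) * ih

lemma pellP_pos (m : ℕ) : 1 ≤ (pellP m).2 ∧ (pellP m).2 ≤ (pellP m).1 ∧ 2*m+1 ≤ (pellP m).1 := by
  induction m with
  | zero => simp [pellP]
  | succ m ih => simp only [pellP]; omega


lemma gap (n k : ℕ) (hn : 1 ≤ n) (hk : k ≤ n) :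
    2 / (5 * (n:ℝ)^2) ≤ |Real.sqrt 2 * (k / n) - 1| := by
  have hn0 : (0:ℝ) < n := by exact_mod_cast hn
  have hn1 : (1:ℝ) ≤ n := by exact_mod_cast hn
  have s2 : Real.sqrt 2 ^ 2 = 2 := Real.sq_sqrt (by norm_num)
  have s2pos : (0:ℝ) < Real.sqrt 2 := Real.sqrt_pos.2 (by norm_num)
  have hrw : Real.sqrt 2 * ((k:ℝ) / n) - 1 = (Real.sqrt 2 * k - n) / n := by
    field_simp
  rw [hrw, abs_div, abs_of_pos hn0]
  have key : 2 / (5 * (n:ℝ)) ≤ |Real.sqrt 2 * k - n| := by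
    by_cases hc1 : Real.sqrt 2 * k ≤ n / 2
    · have : (n:ℝ)/2 ≤ |Real.sqrt 2 * k - n| := by
        rw [abs_sub_comm, abs_of_nonneg (by linarith)]
        linarith
      have h2 : 2 / (5 * (n:ℝ)) ≤ n / 2 := by
        rw [div_le_div_iff₀ (by positivity) (by norm_num)]
        nlinarith
      linarith
    by_cases hc2 : 3 * (n:ℝ) / 2 ≤ Real.sqrt 2 * k
    · have : (n:ℝ)/2 ≤ |Real.sqrt 2 * k - n| := by
        rw [abs_of_nonneg (by linarith)]
        linarith
      have h2 : 2 / (5 * (n:ℝ)) ≤ n / 2 := by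
        rw [div_le_div_iff₀ (by positivity) (by norm_num)]
        nlinarith
      linarith
    push_neg at hc1 hc2
    have hk0 : 0 < k := by
      by_contra h
      have : k = 0 := by omega
      rw [this] at hc1; push_cast at hc1; rw [mul_zero] at hc1; linarith
    have hk0' : (0:ℝ) < k := by exact_mod_cast hk0
    -- 2k^2 ≠ n^2
    have hne : (2 * (k:ℤ)^2 - (n:ℤ)^2) ≠ 0 := by
      intro h
      apply irrational_sqrt_two
      have h2 : (2:ℝ) * (k:ℝ)^2 = (n:ℝ)^2 := by exact_mod_cast (by linarith [h] : (2 * (k:ℤ)^2 : ℤ) = (n:ℤ)^2)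
      have hs : Real.sqrt 2 = (n:ℝ) / k := by
        rw [show (2:ℝ) = ((n:ℝ)/k)^2 by field_simp; linarith]
        exact Real.sqrt_sq (by positivity)
      rw [hs]
      exact ⟨(n:ℚ)/(k:ℚ), by push_cast; ring⟩
    have h1le : (1:ℝ) ≤ |2 * (k:ℝ)^2 - (n:ℝ)^2| := by
      have : (1:ℤ) ≤ |2 * (k:ℤ)^2 - (n:ℤ)^2| := Int.one_le_abs hne
      calc (1:ℝ) ≤ ((|2 * (k:ℤ)^2 - (n:ℤ)^2| : ℤ) : ℝ) := by exact_mod_cast this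
        _ = |2 * (k:ℝ)^2 - (n:ℝ)^2| := by push_cast; norm_num
    have hprod : |Real.sqrt 2 * k - n| * (Real.sqrt 2 * k + n) = |2 * (k:ℝ)^2 - (n:ℝ)^2| := by
      rw [← abs_of_pos (show (0:ℝ) < Real.sqrt 2 * k + n by positivity), ← abs_mul]
      congr 1
      nlinarith [s2]
    have hsum : Real.sqrt 2 * k + n ≤ 5 * n / 2 := by linarith
    have habs : 1 ≤ |Real.sqrt 2 * k - n| * (5 * n / 2) := by
      calc (1:ℝ) ≤ |2 * (k:ℝ)^2 - (n:ℝ)^2| := h1le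
        _ = |Real.sqrt 2 * k - n| * (Real.sqrt 2 * k + n) := hprod.symm
        _ ≤ |Real.sqrt 2 * k - n| * (5 * n / 2) := by
            exact mul_le_mul_of_nonneg_left hsum (abs_nonneg _)
    rw [div_le_iff₀ (by positivity)]
    nlinarith [habs, abs_nonneg (Real.sqrt 2 * k - n)]
  rw [div_le_div_iff₀ (by positivity) hn0]
  rw [div_le_iff₀ (by positivity)] at key
  nlinarith [key]



lemma caseB (δ A B F1 : ℝ) (hδ0 : 0 < δ) (hA2 : δ^2 ≤ A^2) (hB2 : B^2 ≤ δ^2/4)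
    (hF1 : 0 ≤ F1) : δ^2/32 ≤ F1 + (A+B)^2 := by
  nlinarith [sq_nonneg (A + 2*B)]

lemma key_ineq (n : ℕ) (hn : 1 ≤ n) (lam : Fin n → ℝ) :
    1 / (200 * (n:ℝ)^4) ≤ (n:ℝ)⁻¹ * (∑ i, (lam i - lam i ^ 2)^2)
      + (Real.sqrt 2 * ((n:ℝ)⁻¹ * ∑ i, lam i) - 1)^2 := by
  classical
  have hn0 : (0:ℝ) < n := by exact_mod_cast hn
  have s2 : Real.sqrt 2 ^ 2 = 2 := Real.sq_sqrt (by norm_num)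
  set δ : ℝ := 2 / (5*(n:ℝ)^2) with hδ
  have hδ0 : 0 < δ := by positivity
  have hε : 1 / (200 * (n:ℝ)^4) = δ^2/32 := by
    rw [hδ]; field_simp; ring
  set r : Fin n → ℝ := fun i => if (1:ℝ)/2 ≤ lam i then 1 else 0 with hr
  set d : Fin n → ℝ := fun i => lam i - r i with hd
  set K : ℕ := (Finset.univ.filter (fun i => (1:ℝ)/2 ≤ lam i)).card with hK
  have hKn : K ≤ n := le_trans (Finset.card_filter_le _ _) (by simp)
  have hsumr : ∑ i, r i = (K:ℝ) := by
    rw [hr, hK]; simp [Finset.sum_boole]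
  have hg : ∀ i, d i ^ 2 / 4 ≤ (lam i - lam i ^ 2)^2 := by
    intro i
    rw [hd, hr]
    by_cases h : (1:ℝ)/2 ≤ lam i
    · simp only [h, if_true]
      nlinarith [mul_nonneg (mul_nonneg (sq_nonneg (lam i - 1))
        (by linarith : (0:ℝ) ≤ lam i - 1/2)) (by linarith : (0:ℝ) ≤ lam i + 1/2)]
    · simp only [h, if_false]
      push_neg at h
      nlinarith [mul_nonneg (mul_nonneg (sq_nonneg (lam i))
        (by linarith : (0:ℝ) ≤ 1/2 - lam i)) (by linarith : (0:ℝ) ≤ 3/2 - lam i)]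
  set S1 : ℝ := (n:ℝ)⁻¹ * ∑ i, d i ^ 2 with hS1
  set S0 : ℝ := (n:ℝ)⁻¹ * ∑ i, d i with hS0
  have hS1nn : 0 ≤ S1 := by positivity
  have hCS : S0^2 ≤ S1 := by
    have h := sq_sum_le_card_mul_sum_sq (s := Finset.univ) (f := d)
    simp only [Finset.card_univ, Fintype.card_fin] at h
    rw [hS0, hS1, mul_pow, inv_pow, pow_two]
    calc ((n:ℝ)*(n:ℝ))⁻¹ * (∑ i, d i)^2 ≤ ((n:ℝ)*(n:ℝ))⁻¹ * ((n:ℝ) * ∑ i, d i ^2) := by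
          apply mul_le_mul_of_nonneg_left _ (by positivity)
          exact_mod_cast h
      _ = (n:ℝ)⁻¹ * ∑ i, d i ^2 := by field_simp
  have hterm1 : S1/4 ≤ (n:ℝ)⁻¹ * (∑ i, (lam i - lam i ^ 2)^2) := by
    rw [hS1, div_eq_mul_inv, mul_assoc]
    apply mul_le_mul_of_nonneg_left _ (by positivity)
    rw [Finset.sum_mul]
    apply Finset.sum_le_sum
    intro i _
    rw [← div_eq_mul_inv]
    exact hg i
  have hgap : δ ≤ |Real.sqrt 2 * ((K:ℝ) / n) - 1| := gap n K hn hKn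
  have hsplit : Real.sqrt 2 * ((n:ℝ)⁻¹ * ∑ i, lam i) - 1
      = (Real.sqrt 2 * ((K:ℝ)/n) - 1) + Real.sqrt 2 * S0 := by
    have h : ∑ i, lam i = (K:ℝ) + ∑ i, d i := by
      rw [← hsumr, ← Finset.sum_add_distrib]
      apply Finset.sum_congr rfl
      intro i _
      rw [hd]; ring
    rw [h, hS0]
    field_simp
    ring
  clear_value S1 S0 K
  by_cases hc : δ^2/8 ≤ S1
  · have h1 : δ^2/32 ≤ S1/4 := by linarith
    rw [hε]
    have := sq_nonneg (Real.sqrt 2 * ((n:ℝ)⁻¹ * ∑ i, lam i) - 1)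
    linarith [hterm1]
  · push_neg at hc
    have hA2 : δ^2 ≤ (Real.sqrt 2 * ((K:ℝ)/n) - 1)^2 := by
      have h1 := mul_self_le_mul_self (le_of_lt hδ0) hgap
      calc δ^2 = δ*δ := sq δ
        _ ≤ |Real.sqrt 2 * ((K:ℝ)/n) - 1| * |Real.sqrt 2 * ((K:ℝ)/n) - 1| := h1
        _ = (Real.sqrt 2 * ((K:ℝ)/n) - 1)^2 := by rw [← abs_mul, abs_mul_self, sq]
    have hB2 : (Real.sqrt 2 * S0)^2 ≤ δ^2/4 := by
      rw [mul_pow, s2]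
      nlinarith [hCS, hc]
    rw [hε, hsplit]
    exact caseB δ _ _ _ hδ0 hA2 hB2 (by positivity)



open Matrix in
lemma conj_mul_conj {n : ℕ} (U : Matrix (Fin n) (Fin n) ℝ) (hU : star U * U = 1)
    (A B : Matrix (Fin n) (Fin n) ℝ) :
    (U * A * star U) * (U * B * star U) = U * (A * B) * star U := by
  simp only [Matrix.mul_assoc]
  rw [← Matrix.mul_assoc (star U) U, hU, Matrix.one_mul]

open Matrix in
lemma trace_conj {n : ℕ} (U : Matrix (Fin n) (Fin n) ℝ) (hU : star U * U = 1)
    (A : Matrix (Fin n) (Fin n) ℝ) : (U * A * star U).trace = A.trace := by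
  rw [Matrix.trace_mul_cycle, hU, Matrix.one_mul]

open Matrix in
lemma Fval_eq_sum {n : ℕ} (X : Matrix (Fin n) (Fin n) ℝ) (hX : X.IsHermitian) :
    Fval n X = (n:ℝ)⁻¹ * (∑ i, (hX.eigenvalues i - hX.eigenvalues i ^ 2)^2)
      + (Real.sqrt 2 * ((n:ℝ)⁻¹ * ∑ i, hX.eigenvalues i) - 1)^2 := by
  set U : Matrix (Fin n) (Fin n) ℝ := (hX.eigenvectorUnitary : Matrix (Fin n) (Fin n) ℝ) with hUdef
  have hU : star U * U = 1 := Matrix.mem_unitaryGroup_iff'.mp hX.eigenvectorUnitary.2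
  have hspec : X = U * Matrix.diagonal hX.eigenvalues * star U := by
    have := hX.spectral_theorem
    simpa [RCLike.ofReal_real_eq_id] using this
  set lam := hX.eigenvalues
  have hpow : X ^ 2 = U * (Matrix.diagonal lam) ^ 2 * star U := by
    rw [pow_two, pow_two, hspec, conj_mul_conj U hU]
  have hsub : X - X ^ 2 = U * (Matrix.diagonal lam - (Matrix.diagonal lam) ^ 2) * star U := by
    rw [hpow]
    nth_rewrite 1 [hspec]
    rw [Matrix.mul_sub, Matrix.sub_mul]
  have hsq : (X - X ^ 2) ^ 2
      = U * (Matrix.diagonal (fun i => (lam i - lam i ^ 2) ^ 2)) * star U := by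
    rw [pow_two, hsub, conj_mul_conj U hU]
    congr 1
    congr 1
    rw [Matrix.diagonal_pow, Matrix.diagonal_sub, Matrix.diagonal_mul_diagonal]
    apply congrArg Matrix.diagonal
    funext i
    simp only [Pi.sub_apply, Pi.pow_apply, Pi.mul_apply]
    ring
  have htr1 : ((X - X ^ 2) ^ 2).trace = ∑ i, (lam i - lam i ^ 2)^2 := by
    rw [hsq, trace_conj U hU, Matrix.trace_diagonal]
  have htr2 : X.trace = ∑ i, lam i := by
    rw [hspec, trace_conj U hU, Matrix.trace_diagonal]
  rw [Fval, htr1, htr2]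



lemma witness (a b : ℕ) (ha : 1 ≤ a) (hb : b ≤ a) :
    ∃ Y : Matrix (Fin a) (Fin a) ℝ, Y.IsSymm ∧
      Fval a Y = (Real.sqrt 2 * ((b:ℝ)/a) - 1)^2 := by
  classical
  set v : Fin a → ℝ := fun i => if (i:ℕ) < b then 1 else 0 with hv
  refine ⟨Matrix.diagonal v, Matrix.isSymm_diagonal v, ?_⟩
  have ha0 : (0:ℝ) < a := by exact_mod_cast ha
  have hvsq : v ^ 2 = v := by
    funext i
    simp only [Pi.pow_apply, hv]
    by_cases h : (i:ℕ) < b <;> simp [h]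
  have h1 : Matrix.diagonal v - (Matrix.diagonal v) ^ 2 = 0 := by
    rw [Matrix.diagonal_pow, hvsq, sub_self]
  have htr : (Matrix.diagonal v).trace = (b:ℝ) := by
    rw [Matrix.trace_diagonal, hv]
    rw [Fin.sum_univ_eq_sum_range (fun i => if i < b then (1:ℝ) else 0) a]
    rw [Finset.sum_boole]
    have : (Finset.range a).filter (fun i => i < b) = Finset.range b := by
      ext i
      simp only [Finset.mem_filter, Finset.mem_range]
      omega
    rw [this, Finset.card_range]
  rw [Fval, h1, htr]
  norm_num [div_eq_inv_mul]

lemma upper_est (n a b : ℕ) (hn : 1 ≤ n) (ha1 : 1 ≤ a) (han : 4*n+1 ≤ a)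
    (hzint : (((a:ℤ)^2 - 2*(b:ℤ)^2)^2 : ℤ) = 1) :
    (Real.sqrt 2 * ((b:ℝ)/a) - 1)^2 < 1/(200*(n:ℝ)^4) := by
  have hn0 : (0:ℝ) < n := by exact_mod_cast hn
  have ha0 : (0:ℝ) < a := by exact_mod_cast ha1
  have s2 : Real.sqrt 2 ^ 2 = 2 := Real.sq_sqrt (by norm_num)
  have s2nn : (0:ℝ) ≤ Real.sqrt 2 := Real.sqrt_nonneg 2
  have hz : ((a:ℝ)^2 - 2*(b:ℝ)^2)^2 = 1 := by exact_mod_cast hzint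
  have e1 : Real.sqrt 2 * ((b:ℝ)/a) - 1 = (Real.sqrt 2 * b - a)/a := by
    field_simp
  rw [e1, div_pow]
  have hkey : (Real.sqrt 2 * b - a)^2 * (Real.sqrt 2 * b + a)^2 = 1 := by
    rw [← mul_pow]
    have h : (Real.sqrt 2 * b - a) * (Real.sqrt 2 * b + a) = 2*(b:ℝ)^2 - (a:ℝ)^2 := by
      have expand : (Real.sqrt 2 * b - a) * (Real.sqrt 2 * b + a)
          = Real.sqrt 2 ^2 * (b:ℝ)^2 - (a:ℝ)^2 := by ring
      rw [expand, s2]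
    rw [h]
    nlinarith [hz]
  have hbnn : (0:ℝ) ≤ (b:ℝ) := by positivity
  have hS : (a:ℝ)^2 ≤ (Real.sqrt 2 * b + a)^2 := by nlinarith [mul_nonneg s2nn hbnn]
  have hXnn : (0:ℝ) ≤ (Real.sqrt 2 * b - a)^2 := sq_nonneg _
  have h1 : (Real.sqrt 2 * b - a)^2 * (a:ℝ)^2 ≤ 1 := by
    calc (Real.sqrt 2 * b - a)^2 * (a:ℝ)^2
        ≤ (Real.sqrt 2 * b - a)^2 * (Real.sqrt 2 * b + a)^2 :=
          mul_le_mul_of_nonneg_left hS hXnn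
      _ = 1 := hkey
  have h2 : (Real.sqrt 2 * b - a)^2 / (a:ℝ)^2 ≤ 1/(a:ℝ)^4 := by
    rw [div_le_div_iff₀ (by positivity) (by positivity)]
    have hh := mul_le_mul_of_nonneg_right h1 (sq_nonneg ((a:ℝ)))
    nlinarith [hh]
  have h3 : 1/(a:ℝ)^4 < 1/(200 * (n:ℝ)^4) := by
    rw [div_lt_div_iff₀ (by positivity) (by positivity)]
    have ha4 : (4*(n:ℝ)+1) ≤ a := by exact_mod_cast han
    have hp : (4*(n:ℝ)+1)^4 ≤ (a:ℝ)^4 := by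
      apply pow_le_pow_left₀ (by positivity) ha4
    nlinarith [hp, pow_pos hn0 4, pow_nonneg (le_of_lt hn0) 3, pow_nonneg (le_of_lt hn0) 2, hn0.le]
  linarith [h2, h3]

/-- For every size `n` there is `ε > 0` with `F ≥ ε` on `Sym_n`, yet `F < ε` somewhere on
a larger size: no single matrix size suffices to verify positivity. -/
theorem stmt_16 (n : ℕ) (hn : 1 ≤ n) :
    ∃ ε : ℝ, 0 < ε ∧
      (∀ X : Matrix (Fin n) (Fin n) ℝ, X.IsSymm → ε ≤ Fval n X) ∧
      ∃ N : ℕ, n < N ∧ ∃ Y : Matrix (Fin N) (Fin N) ℝ, Y.IsSymm ∧ Fval N Y < ε := by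
  classical
  have hn0 : (0:ℝ) < n := by exact_mod_cast hn
  refine ⟨1 / (200 * (n:ℝ)^4), by positivity, ?_, ?_⟩
  · intro X hsym
    have hX : X.IsHermitian := by
      rw [Matrix.IsHermitian, Matrix.conjTranspose_eq_transpose_of_trivial]
      exact hsym
    rw [Fval_eq_sum X hX]
    exact key_ineq n hn hX.eigenvalues
  · set a : ℕ := (pellP (2*n)).1 with hadef
    set b : ℕ := (pellP (2*n)).2 with hbdef
    obtain ⟨hb1, hba, han⟩ := pellP_pos (2*n)
    rw [← hbdef] at hb1
    rw [← hbdef, ← hadef] at hba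
    rw [← hadef] at han
    have ha1 : 1 ≤ a := le_trans hb1 hba
    obtain ⟨Y, hYsymm, hYval⟩ := witness a b ha1 hba
    have hzint : (((a:ℤ)^2 - 2*(b:ℤ)^2)^2 : ℤ) = 1 := by
      rw [hadef, hbdef, pellP_sq]
      rw [← pow_mul, mul_comm (2*n+1) 2, pow_mul]
      norm_num
    clear_value a b
    refine ⟨a, by omega, Y, hYsymm, ?_⟩
    rw [hYval]
    exact upper_est n a b hn ha1 (by omega) hzint

end
end

section
/- For every d ∈ ℕ there exists α = (α₁, …, α_{2d+4}) ∈ ℝ^{2d+4} such that: (i) the (d+3)×(d+3) Hankel matrix with (i,j)-entry α_{i+j−2} for 1 ≤ i,j ≤ d+3 (with α₀ := 1) is positive semidefinite; (ii) the (d+1)×(d+1) Hankel matrix with (i,j)-entry α_{i+j+1} for 1 ≤ i,j ≤ d+1 is positive semidefinite; and (iii) α₁ < 0. -/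
noncomputable section

lemma exp_ineq (c i j : ℕ) (h : i ≠ j) :
    2*(i+j+c)^2 + 1 ≤ (i+i+c)^2 + (j+j+c)^2 := by
  have hne : (i:ℤ) - j ≠ 0 := by
    intro hc
    exact h (by omega)
  have h2 : 1 ≤ ((i:ℤ) - j)^2 := by
    rcases hne.lt_or_gt with h' | h' <;> nlinarith
  zify
  nlinarith [h2]

/-- base constant -/
def myK (d : ℕ) : ℝ := 2*(d:ℝ) + 9

/-- the moment sequence: `±K^(2m²)`, negative exactly at `m = 1`. -/
def myS (d : ℕ) (m : ℕ) : ℝ :=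
  if m = 1 then -(myK d ^ (2*m^2)) else myK d ^ (2*m^2)

lemma myK_one_le (d : ℕ) : (1:ℝ) ≤ myK d := by
  unfold myK
  have : (0:ℝ) ≤ (d:ℝ) := Nat.cast_nonneg d
  linarith

lemma myK_pos (d : ℕ) : (0:ℝ) < myK d := lt_of_lt_of_le one_pos (myK_one_le d)

lemma myS_abs (d m : ℕ) : |myS d m| = myK d ^ (2*m^2) := by
  have h0 : (0:ℝ) ≤ myK d ^ (2*m^2) := pow_nonneg (myK_pos d).le _
  unfold myS
  split_ifs with h <;> simp [abs_of_nonneg h0]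

lemma myS_pow (d m : ℕ) (h : m ≠ 1) : myS d m = myK d ^ (2*m^2) := by
  simp [myS, h]

lemma key_pow_ineq (d : ℕ) {c i j : ℕ} (h : i ≠ j) :
    myK d ^ (2*(i+j+c)^2) * myK d ≤ myK d ^ ((i+i+c)^2) * myK d ^ ((j+j+c)^2) := by
  have hK1 := myK_one_le d
  calc myK d ^ (2*(i+j+c)^2) * myK d = myK d ^ (2*(i+j+c)^2 + 1) := (pow_succ _ _).symm
    _ ≤ myK d ^ ((i+i+c)^2 + (j+j+c)^2) := pow_le_pow_right₀ hK1 (exp_ineq c i j h)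
    _ = _ := pow_add _ _ _

/-- A symmetric real matrix with diagonal `D i ^ 2` and off-diagonal entries bounded by
`D i * D j / K` for `K ≥ n` is positive semidefinite. -/
lemma aux_psd {n : ℕ} (K : ℝ) (hK1 : 1 ≤ K) (hKn : (n : ℝ) ≤ K)
    (A : Matrix (Fin n) (Fin n) ℝ) (hsym : ∀ i j, A j i = A i j)
    (D : Fin n → ℝ)
    (hdiag : ∀ i, A i i = D i ^ 2)
    (hoff : ∀ i j, i ≠ j → |A i j| * K ≤ D i * D j) :
    A.PosSemidef := by
  have hK0 : (0:ℝ) < K := lt_of_lt_of_le one_pos hK1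
  rw [Matrix.posSemidef_iff_dotProduct_mulVec]
  constructor
  · ext i j
    simp [Matrix.conjTranspose_apply, hsym i j]
  · intro x
    have hstar : star x = x := by
      funext i; simp
    rw [hstar]
    set a : Fin n → ℝ := fun i => (D i * x i) ^ 2 with ha
    set T : ℝ := ∑ i, a i with hT
    set g : Fin n × Fin n → ℝ := fun p => x p.1 * A p.1 p.2 * x p.2 with hg
    have hTnn : 0 ≤ T := Finset.sum_nonneg fun i _ => sq_nonneg _
    have hQ : dotProduct x (A.mulVec x) = ∑ p ∈ (Finset.univ ×ˢ Finset.univ), g p := by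
      rw [Finset.sum_product]
      simp only [dotProduct, Matrix.mulVec, Finset.mul_sum, hg]
      refine Finset.sum_congr rfl fun i _ => Finset.sum_congr rfl fun j _ => by ring
    rw [hQ, ← Finset.diag_union_offDiag (Finset.univ (α := Fin n)),
      Finset.sum_union (Finset.disjoint_diag_offDiag _)]
    have hdiagsum : ∑ p ∈ Finset.univ.diag, g p = T := by
      rw [Finset.sum_diag]
      exact Finset.sum_congr rfl fun i _ => by simp [hg, hdiag i, ha]; ring
    rw [hdiagsum]
    -- bound the off-diagonal sum
    have hterm : ∀ p ∈ Finset.univ.offDiag (α := Fin n),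
        -(a p.1 + a p.2) ≤ 2 * K * g p := by
      intro p hp
      have hne : p.1 ≠ p.2 := (Finset.mem_offDiag.mp hp).2.2
      have hb := hoff p.1 p.2 hne
      have e1 : |g p| * K ≤ (D p.1 * |x p.1|) * (D p.2 * |x p.2|) := by
        have habs : |g p| = |A p.1 p.2| * (|x p.1| * |x p.2|) := by
          simp only [hg, abs_mul]; ring
        rw [habs]
        calc |A p.1 p.2| * (|x p.1| * |x p.2|) * K
            = (|A p.1 p.2| * K) * (|x p.1| * |x p.2|) := by ring
          _ ≤ (D p.1 * D p.2) * (|x p.1| * |x p.2|) :=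
              mul_le_mul_of_nonneg_right hb (by positivity)
          _ = _ := by ring
      have e2 : 2 * ((D p.1 * |x p.1|) * (D p.2 * |x p.2|)) ≤ a p.1 + a p.2 := by
        have h1 : (D p.1 * |x p.1|) ^ 2 = a p.1 := by
          simp [ha, mul_pow, sq_abs]
        have h2 : (D p.2 * |x p.2|) ^ 2 = a p.2 := by
          simp [ha, mul_pow, sq_abs]
        nlinarith [sq_nonneg (D p.1 * |x p.1| - D p.2 * |x p.2|)]
      nlinarith [neg_abs_le (g p), abs_nonneg (g p)]
    have hsum1 : ∑ p ∈ Finset.univ.offDiag (α := Fin n), (a p.1 + a p.2)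
        = 2 * (n : ℝ) * T - 2 * T := by
      have hsplit : ∑ p ∈ Finset.univ.diag, (a p.1 + a p.2)
          + ∑ p ∈ Finset.univ.offDiag, (a p.1 + a p.2)
          = ∑ p ∈ (Finset.univ ×ˢ Finset.univ), (a p.1 + a p.2) := by
        rw [← Finset.sum_union (Finset.disjoint_diag_offDiag _),
          Finset.diag_union_offDiag]
      have hprod : ∑ p ∈ (Finset.univ ×ˢ Finset.univ (α := Fin n)), (a p.1 + a p.2)
          = 2 * (n : ℝ) * T := by
        rw [Finset.sum_product]
        calc ∑ i : Fin n, ∑ j : Fin n, (a i + a j)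
            = ∑ i : Fin n, ((n:ℝ) * a i + T) := Finset.sum_congr rfl fun i _ => by
              rw [Finset.sum_add_distrib]
              simp [hT, Finset.sum_const, Finset.card_univ, nsmul_eq_mul]
          _ = (n:ℝ) * T + (n:ℝ) * T := by
              rw [Finset.sum_add_distrib, ← Finset.mul_sum]
              simp [hT, Finset.sum_const, Finset.card_univ, nsmul_eq_mul]
          _ = 2 * (n:ℝ) * T := by ring
      have hdiag2 : ∑ p ∈ Finset.univ.diag (α := Fin n), (a p.1 + a p.2) = 2 * T := by
        rw [Finset.sum_diag]
        simp [hT, Finset.sum_add_distrib]; ring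
      linarith [hsplit, hprod, hdiag2]
    have hoffsum : -(2 * (n:ℝ) * T - 2 * T) ≤ 2 * K * ∑ p ∈ Finset.univ.offDiag, g p := by
      rw [← hsum1, Finset.mul_sum, ← Finset.sum_neg_distrib]
      exact Finset.sum_le_sum hterm
    nlinarith [hoffsum, hTnn, hK0, hKn, mul_nonneg hTnn (by linarith : (0:ℝ) ≤ K - (n:ℝ) + 1)]

/-- For every `d` there is `α ∈ ℝ^{2d+4}` (here `α i` stands for `α_{i+1}`) whose Hankel
matrix `Han_{d+2}[α]` and localized Hankel matrix `Han_d^{x³}[α]` are positive semidefinite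
while `α₁ < 0`. -/
theorem stmt_17 (d : ℕ) :
    ∃ α : Fin (2*d+4) → ℝ,
      (Matrix.of fun i j : Fin (d+3) =>
        if h : i.val + j.val = 0 then (1 : ℝ)
        else α ⟨i.val + j.val - 1, by have hi := i.isLt; have hj := j.isLt; omega⟩).PosSemidef ∧
      (Matrix.of fun i j : Fin (d+1) =>
        α ⟨i.val + j.val + 2, by have hi := i.isLt; have hj := j.isLt; omega⟩).PosSemidef ∧
      α ⟨0, by omega⟩ < 0 := by
  have hK1 := myK_one_le d
  have hKpos := myK_pos d
  refine ⟨fun k => myS d (k.val + 1), ?_, ?_, ?_⟩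
  · -- big Hankel matrix
    have hA : ∀ i j : Fin (d+3),
        (Matrix.of fun i j : Fin (d+3) =>
          if h : i.val + j.val = 0 then (1 : ℝ)
          else myS d ((⟨i.val + j.val - 1, by have hi := i.isLt; have hj := j.isLt; omega⟩ :
            Fin (2*d+4)).val + 1)) i j = myS d (i.val + j.val) := by
      intro i j
      simp only [Matrix.of_apply]
      split_ifs with h
      · rw [h]
        simp [myS, myK]
      · congr 1
        omega
    apply aux_psd (myK d) hK1 (by unfold myK; push_cast; linarith [Nat.cast_nonneg (α := ℝ) d])
      _ (fun i j => by rw [hA i j, hA j i, Nat.add_comm (j:ℕ) (i:ℕ)])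
      (fun i : Fin (d+3) => myK d ^ ((i.val + i.val)^2))
    · intro i
      rw [hA i i, myS_pow d _ (by omega), ← pow_mul]
      congr 1
      ring
    · intro i j hij
      rw [hA i j, myS_abs]
      have hne : (i:ℕ) ≠ (j:ℕ) := fun hc => hij (Fin.ext hc)
      have := key_pow_ineq d (c := 0) hne
      simpa using this
  · -- localized Hankel matrix
    have hA : ∀ i j : Fin (d+1),
        (Matrix.of fun i j : Fin (d+1) =>
          myS d ((⟨i.val + j.val + 2, by have hi := i.isLt; have hj := j.isLt; omega⟩ :
            Fin (2*d+4)).val + 1)) i j = myS d (i.val + j.val + 3) := by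
      intro i j
      simp only [Matrix.of_apply]
    apply aux_psd (myK d) hK1 (by unfold myK; push_cast; linarith [Nat.cast_nonneg (α := ℝ) d])
      _ (fun i j => by rw [hA i j, hA j i, Nat.add_comm (j:ℕ) (i:ℕ)])
      (fun i : Fin (d+1) => myK d ^ ((i.val + i.val + 3)^2))
    · intro i
      rw [hA i i, myS_pow d _ (by omega), ← pow_mul]
      congr 1
      ring
    · intro i j hij
      rw [hA i j, myS_abs]
      have hne : (i:ℕ) ≠ (j:ℕ) := fun hc => hij (Fin.ext hc)
      exact key_pow_ineq d (c := 3) hne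
  · -- α₁ < 0
    have : (0:ℝ) < myK d ^ (2*1^2) := pow_pos hKpos _
    simp only [myS]
    norm_num
    exact pow_pos hKpos 2

end
end
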